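/- arXiv:1907.10590 — 7 statements merged into one kernel-verified Lean document; each statement's English description precedes it below -/
import Mathlib

section
/- Assume every candidate has unlimited capacity (m_i = ∞) and every vote type approves exactly one candidate, so we may write v_i for the initial number of votes of candidate i. Then any final allocation (n_i) produced by the Eneström–Phragmén procedure is a largest-remainders allocation with the Droop quota q = v/(n+1): writing t_i = ⌊v_i/q⌋ and r_i = v_i − t_i·q, either (a) Σ_i t_i ≤ n, n_i ≥ t_i for all i, and the n − Σ_i t_i candidates i with n_i = t_i + 1 have remainders r_i at least as large as the remainder of any candidate j with n_j = t_j; or (b) Σ_i t_i = n+1 (so all r_i = 0, every v_i is a multiple of q), and n_i = t_i for all i except one candidate j with v_j > 0 for which n_j = t_j − 1. -/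
/-!
The Eneström–Phragmén procedure.

We fix a number of seats `n ≥ 1`, a finite set `ι` of candidates with capacities
`m i ∈ ℕ∞`, a finite set `κ` of vote types, and for each vote type a positive weight
`v k` and a nonempty approval set `A k`.  The total vote is `V = ∑ k, v k` and the
(Droop) quota is `q = V / (n + 1)`.  An execution of the procedure is recorded by the
vote weights `vk s k` at each step `s`, the seat counts `seats s i`, and the candidate
`winner s` receiving seat `s + 1` (for `s < n`), subject to the rules of the procedure.
-/

namespace EP

/-- The data of an Eneström–Phragmén election. -/
structure Input (ι κ : Type*) [Fintype ι] [DecidableEq ι] [Fintype κ] : Type _ where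
  /-- number of seats -/
  n : ℕ
  hn : 1 ≤ n
  /-- capacities of the candidates -/
  m : ι → ℕ∞
  /-- weights of the vote types -/
  v : κ → ℝ
  hv : ∀ k, 0 < v k
  /-- approval sets of the vote types -/
  A : κ → Finset ι
  hA : ∀ k, (A k).Nonempty

namespace Input

variable {ι κ : Type*} [Fintype ι] [DecidableEq ι] [Fintype κ] (P : Input ι κ)

/-- Total number of votes. -/
noncomputable def V : ℝ := ∑ k, P.v k

/-- The Droop quota `q = v / (n + 1)`. -/
noncomputable def q : ℝ := P.V / (P.n + 1)

/-- Support of candidate `i` given current vote weights `u`: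
`w_i = ∑_{k : i ∈ A_k} u_k`. -/
noncomputable def supp (u : κ → ℝ) (i : ι) : ℝ :=
  ∑ k ∈ Finset.univ.filter (fun k => i ∈ P.A k), u k

/-- Standing assumption: at least `n` candidates have positive initial support. -/
def enough : Prop := P.n ≤ {i : ι | 0 < P.supp P.v i}.ncard

end Input

/-- An execution of the Eneström–Phragmén procedure: at each step `s < n`,
seat `s + 1` is given to an eligible candidate `winner s` of maximal support, and the
votes approving the winner are reduced according to the quota rule. -/
structure Exec {ι κ : Type*} [Fintype ι] [DecidableEq ι] [Fintype κ]
    (P : Input ι κ) : Type _ where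
  /-- the vote weights `v_k[s]` -/
  vk : ℕ → κ → ℝ
  /-- the seat counts `n_i[s]` -/
  seats : ℕ → ι → ℕ
  /-- the candidate receiving seat `s + 1` -/
  winner : ℕ → ι
  vk_init : vk 0 = P.v
  seats_init : ∀ i, seats 0 i = 0
  /-- the winner is eligible -/
  winner_elig : ∀ s < P.n, (seats s (winner s) : ℕ∞) < P.m (winner s)
  /-- the winner maximizes the support among eligible candidates -/
  winner_max : ∀ s < P.n, ∀ i : ι, (seats s i : ℕ∞) < P.m i →
    P.supp (vk s) i ≤ P.supp (vk s) (winner s)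
  seats_succ : ∀ s < P.n, ∀ i : ι,
    seats (s + 1) i = if i = winner s then seats s i + 1 else seats s i
  /-- vote reduction when the winner has at least a quota -/
  vk_succ_ge : ∀ s < P.n, ∀ k, winner s ∈ P.A k → P.q ≤ P.supp (vk s) (winner s) →
    vk (s + 1) k = (1 - P.q / P.supp (vk s) (winner s)) * vk s k
  /-- vote exhaustion when the winner has less than a quota -/
  vk_succ_lt : ∀ s < P.n, ∀ k, winner s ∈ P.A k → P.supp (vk s) (winner s) < P.q →
    vk (s + 1) k = 0
  /-- votes not approving the winner are unchanged -/
  vk_succ_out : ∀ s < P.n, ∀ k, winner s ∉ P.A k → vk (s + 1) k = vk s k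

end EP

/-!
With single-candidate ballots and unlimited capacities, a candidate `i` holding `s_i` seats has
support `max (v_i - s_i q) 0`, with `s_i q < v_i + q`: each seat costs its winner one quota, or
all of its remaining support if that is less. Summing, the total support after `s` seats is at
least `v - s q = (n + 1 - s) q > 0`, so every winner still has positive support.

When `i` receives its `(k+1)`-st seat it beats every candidate `j`, whose support at that moment
is at least its final residual `v_j - n_j q`; hence `v_j - n_j q ≤ v_i - k q`. With `k = t_i`
this orders the remainders and forbids a candidate with `n_j < t_j` alongside one with
`n_i = t_i + 1`. Counting seats against `∑ v_i = (n + 1) q` gives the two alternatives.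
-/

namespace EP

section LargestRemainders

variable {ι : Type*} [Fintype ι] {n : ℕ} {q : ℝ} {v r : ι → ℝ} {N t : ι → ℕ}

theorem largest_remainders_of_exists_lt (hq : 0 < q) (hsum : ∑ i, v i = (n + 1) * q)
    (hlo : ∀ i, t i * q ≤ v i) (hhi : ∀ i, v i < (t i + 1) * q)
    (hr : ∀ i, r i = v i - t i * q) (hN : ∑ i, N i = n)
    (hres : ∀ i j k, k < N i → v j - N j * q ≤ v i - k * q) {j : ι} (hj : N j < t j) :
    ∑ i, t i = n + 1 ∧ (∀ i, r i = 0) ∧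
      ∃ j : ι, 0 < v j ∧ N j + 1 = t j ∧ ∀ i, i ≠ j → N i = t i := by
  classical
  have hle : ∀ i, N i ≤ t i := by
    intro i
    by_contra! hi
    have hjq : ((N j : ℝ) + 1) * q ≤ t j * q :=
      mul_le_mul_of_nonneg_right (by exact_mod_cast hj) hq.le
    linarith [hres i j (t i) hi, hlo j, hhi i]
  have hsum_t : ∑ i, t i = n + 1 := by
    have hupper : (∑ i, (t i : ℝ)) * q ≤ (n + 1) * q := by
      rw [← hsum, Finset.sum_mul]
      exact Finset.sum_le_sum fun i _ => hlo i
    have hlower := Finset.sum_lt_sum (fun i _ => hle i) ⟨j, Finset.mem_univ j, hj⟩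
    have : ∑ i, t i ≤ n + 1 := by exact_mod_cast le_of_mul_le_mul_right hupper hq
    omega
  have hsum_r : ∑ i, r i = 0 := by
    have : (∑ i, (t i : ℝ)) = n + 1 := by exact_mod_cast hsum_t
    rw [Finset.sum_congr rfl fun i _ => hr i, Finset.sum_sub_distrib, ← Finset.sum_mul, this,
      hsum, sub_self]
  have hN_split := Finset.add_sum_erase Finset.univ N (Finset.mem_univ j)
  have ht_split := Finset.add_sum_erase Finset.univ t (Finset.mem_univ j)
  have hN_erase : ∑ i ∈ Finset.univ.erase j, N i = ∑ i ∈ Finset.univ.erase j, t i := by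
    have := Finset.sum_le_sum fun i (_ : i ∈ Finset.univ.erase j) => hle i
    omega
  refine ⟨hsum_t, fun i => ?_, j, ?_, ?_, fun i hi => ?_⟩
  · exact (Finset.sum_eq_zero_iff_of_nonneg fun i _ => by linarith [hr i, hlo i]).1 hsum_r i
      (Finset.mem_univ i)
  · have : (1 : ℝ) ≤ t j := by exact_mod_cast Nat.one_le_of_lt hj
    nlinarith [hlo j]
  · omega
  · exact (Finset.sum_eq_sum_iff_of_le fun i _ => hle i).1 hN_erase i
      (Finset.mem_erase.2 ⟨hi, Finset.mem_univ i⟩)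

theorem largest_remainders_of_le (hq : 0 < q) (hhi : ∀ i, v i < (t i + 1) * q)
    (hr : ∀ i, r i = v i - t i * q) (hN : ∑ i, N i = n) (hNq : ∀ i, N i * q < v i + q)
    (hres : ∀ i j k, k < N i → v j - N j * q ≤ v i - k * q) (hle : ∀ i, t i ≤ N i) :
    (∑ i, t i) ≤ n ∧ (Finset.univ.filter (fun i => N i = t i + 1)).card = n - ∑ i, t i ∧
      ∀ i j : ι, N i = t i + 1 → N j = t j → r j ≤ r i := by
  have hle_succ : ∀ i, N i ≤ t i + 1 := fun i => by
    have : (N i : ℝ) * q < (t i + 2) * q := by linarith [hNq i, hhi i]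
    exact Nat.lt_succ_iff.1 (by exact_mod_cast lt_of_mul_lt_mul_right this hq.le)
  have hsplit : ∑ i, N i = ∑ i, t i + (Finset.univ.filter (fun i => N i = t i + 1)).card := by
    rw [Finset.card_filter, ← Finset.sum_add_distrib]
    refine Finset.sum_congr rfl fun i _ => ?_
    have := hle i
    have := hle_succ i
    split_ifs <;> omega
  refine ⟨by omega, by omega, fun i j hi hj => ?_⟩
  have := hres i j (t i) (by omega)
  rw [hj] at this
  linarith [hr i, hr j]

theorem largest_remainders (hq : 0 < q) (hv : ∀ i, 0 ≤ v i) (hsum : ∑ i, v i = (n + 1) * q)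
    (ht : ∀ i, t i = ⌊v i / q⌋₊) (hr : ∀ i, r i = v i - t i * q) (hN : ∑ i, N i = n)
    (hNq : ∀ i, N i * q < v i + q) (hres : ∀ i j k, k < N i → v j - N j * q ≤ v i - k * q) :
    ((∑ i, t i) ≤ n ∧ (∀ i, t i ≤ N i) ∧
      (Finset.univ.filter (fun i => N i = t i + 1)).card = n - ∑ i, t i ∧
      (∀ i j : ι, N i = t i + 1 → N j = t j → r j ≤ r i))
    ∨ ((∑ i, t i) = n + 1 ∧ (∀ i, r i = 0) ∧
      ∃ j : ι, 0 < v j ∧ N j + 1 = t j ∧ ∀ i, i ≠ j → N i = t i) := by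
  have hlo : ∀ i, t i * q ≤ v i := fun i => by
    rw [ht i, ← le_div_iff₀ hq]
    exact Nat.floor_le (div_nonneg (hv i) hq.le)
  have hhi : ∀ i, v i < (t i + 1) * q := fun i => by
    rw [ht i, ← div_lt_iff₀ hq]
    exact Nat.lt_floor_add_one _
  by_cases h : ∃ j, N j < t j
  · obtain ⟨j, hj⟩ := h
    exact Or.inr (largest_remainders_of_exists_lt hq hsum hlo hhi hr hN hres hj)
  · simp only [not_exists, not_lt] at h
    obtain ⟨hsum_t, hcard, horder⟩ := largest_remainders_of_le hq hhi hr hN hNq hres h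
    exact Or.inl ⟨hsum_t, h, hcard, horder⟩

end LargestRemainders

namespace Input

variable {ι κ : Type*} [Fintype ι] [DecidableEq ι] [Fintype κ] (P : Input ι κ)

theorem supp_v_nonneg (i : ι) : 0 ≤ P.supp P.v i :=
  Finset.sum_nonneg fun k _ => (P.hv k).le

theorem q_nonneg : 0 ≤ P.q :=
  div_nonneg (Finset.sum_nonneg fun k _ => (P.hv k).le) (by positivity)

theorem q_pos (h : P.enough) : 0 < P.q := by
  obtain ⟨i, hi : 0 < P.supp P.v i⟩ : {i : ι | 0 < P.supp P.v i}.Nonempty :=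
    Set.nonempty_of_ncard_ne_zero (by have := P.hn; unfold enough at h; omega)
  obtain ⟨k, -⟩ := Finset.nonempty_of_sum_ne_zero hi.ne'
  exact div_pos (Finset.sum_pos (fun k _ => P.hv k) ⟨k, Finset.mem_univ k⟩) (by positivity)

theorem sum_supp (hA1 : ∀ k, (P.A k).card = 1) (u : κ → ℝ) : ∑ i, P.supp u i = ∑ k, u k := by
  simp only [supp, Finset.sum_filter]
  rw [Finset.sum_comm]
  simp [hA1]

theorem sum_supp_v (hA1 : ∀ k, (P.A k).card = 1) : ∑ i, P.supp P.v i = (P.n + 1) * P.q := by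
  rw [P.sum_supp hA1, q, V, mul_div_cancel₀ _ (by positivity)]

end Input

namespace Exec

variable {ι κ : Type*} [Fintype ι] [DecidableEq ι] [Fintype κ] {P : Input ι κ} (E : Exec P)

theorem seats_succ_eq_add {s : ℕ} (hs : s < P.n) (i : ι) :
    E.seats (s + 1) i = E.seats s i + if i = E.winner s then 1 else 0 := by
  rw [E.seats_succ s hs i]
  split_ifs <;> rfl

theorem seats_mono {s s' : ℕ} (hss' : s ≤ s') (hs' : s' ≤ P.n) (i : ι) :
    E.seats s i ≤ E.seats s' i := by
  induction s', hss' using Nat.le_induction with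
  | base => exact le_rfl
  | succ s' _ ih =>
    rw [E.seats_succ_eq_add hs' i]
    exact (ih (by omega)).trans (Nat.le_add_right _ _)

theorem sum_seats {s : ℕ} (hs : s ≤ P.n) : ∑ i, E.seats s i = s := by
  induction s with
  | zero => simp [E.seats_init]
  | succ s ih =>
    simp only [E.seats_succ_eq_add hs, Finset.sum_add_distrib, Finset.sum_ite_eq',
      Finset.mem_univ, if_true, ih (by omega)]

theorem exists_seats_eq_of_lt_seats {s' k : ℕ} {i : ι} (hs' : s' ≤ P.n)
    (hk : k < E.seats s' i) : ∃ s < s', E.winner s = i ∧ E.seats s i = k := by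
  induction s' with
  | zero => simp [E.seats_init] at hk
  | succ s' ih =>
    by_cases hlt : k < E.seats s' i
    · obtain ⟨s, hs, h⟩ := ih (by omega) hlt
      exact ⟨s, by omega, h⟩
    · have := E.seats_succ s' hs' i
      split_ifs at this with hw
      · exact ⟨s', by omega, hw.symm, by omega⟩
      · omega

theorem supp_winner_succ {s : ℕ} (hs : s < P.n) :
    P.supp (E.vk (s + 1)) (E.winner s) = max (P.supp (E.vk s) (E.winner s) - P.q) 0 := by
  rcases le_or_gt P.q (P.supp (E.vk s) (E.winner s)) with hge | hlt
  · have hmul : P.supp (E.vk (s + 1)) (E.winner s)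
        = (1 - P.q / P.supp (E.vk s) (E.winner s)) * P.supp (E.vk s) (E.winner s) := by
      rw [Input.supp, Input.supp, Finset.mul_sum]
      exact Finset.sum_congr rfl fun k hk => E.vk_succ_ge s hs k (Finset.mem_filter.1 hk).2 hge
    rw [hmul, max_eq_left (sub_nonneg.2 hge)]
    rcases eq_or_ne (P.supp (E.vk s) (E.winner s)) 0 with h0 | h0
    · rw [h0] at hge ⊢
      linarith [P.q_nonneg]
    · field_simp
  · rw [max_eq_right (by linarith)]
    exact Finset.sum_eq_zero fun k hk => E.vk_succ_lt s hs k (Finset.mem_filter.1 hk).2 hlt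

theorem supp_succ_of_ne (hA1 : ∀ k, (P.A k).card = 1) {s : ℕ} (hs : s < P.n) {i : ι}
    (hi : i ≠ E.winner s) : P.supp (E.vk (s + 1)) i = P.supp (E.vk s) i :=
  Finset.sum_congr rfl fun k hk => E.vk_succ_out s hs k fun hw =>
    hi (Finset.card_le_one.1 (hA1 k).le i (Finset.mem_filter.1 hk).2 _ hw)

theorem supp_le_supp_winner (hm : ∀ i, P.m i = ⊤) {s : ℕ} (hs : s < P.n) (i : ι) :
    P.supp (E.vk s) i ≤ P.supp (E.vk s) (E.winner s) :=
  E.winner_max s hs i (by simp [hm])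

theorem seats_winner_mul_q_lt (hm : ∀ i, P.m i = ⊤) (hA1 : ∀ k, (P.A k).card = 1)
    (hq : 0 < P.q) {s : ℕ} (hs : s < P.n)
    (hsupp : ∀ i, P.supp (E.vk s) i = max (P.supp P.v i - E.seats s i * P.q) 0) :
    E.seats s (E.winner s) * P.q < P.supp P.v (E.winner s) := by
  have hseats : (∑ i, (E.seats s i : ℝ)) = s := by exact_mod_cast E.sum_seats hs.le
  have htotal : 0 < ∑ i, P.supp (E.vk s) i := calc
    0 < (P.n + 1 - s) * P.q := mul_pos (by linarith [(Nat.cast_lt (α := ℝ)).2 hs]) hq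
    _ = ∑ i, (P.supp P.v i - E.seats s i * P.q) := by
      rw [Finset.sum_sub_distrib, ← Finset.sum_mul, P.sum_supp_v hA1, hseats]
      ring
    _ ≤ ∑ i, P.supp (E.vk s) i := Finset.sum_le_sum fun i _ => (hsupp i).symm ▸ le_max_left _ _
  obtain ⟨i, -, hi⟩ :=
    Finset.exists_lt_of_sum_lt (f := fun _ => (0 : ℝ)) (by simpa using htotal)
  have hpos := hi.trans_le (E.supp_le_supp_winner hm hs i)
  rw [hsupp] at hpos
  exact sub_pos.1 ((lt_max_iff.1 hpos).resolve_right (lt_irrefl 0))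

theorem seats_mul_q_lt_and_supp_eq (hm : ∀ i, P.m i = ⊤) (hA1 : ∀ k, (P.A k).card = 1)
    (hq : 0 < P.q) {s : ℕ} (hs : s ≤ P.n) (i : ι) :
    E.seats s i * P.q < P.supp P.v i + P.q ∧
      P.supp (E.vk s) i = max (P.supp P.v i - E.seats s i * P.q) 0 := by
  induction s generalizing i with
  | zero =>
    simp only [E.seats_init, E.vk_init, Nat.cast_zero, zero_mul, sub_zero]
    exact ⟨by linarith [P.supp_v_nonneg i], (max_eq_left (P.supp_v_nonneg i)).symm⟩
  | succ s ih =>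
    have hs' : s < P.n := hs
    by_cases hi : i = E.winner s
    · subst hi
      have hw := E.seats_winner_mul_q_lt hm hA1 hq hs' fun i => (ih hs'.le i).2
      rw [E.seats_succ s hs', if_pos rfl, E.supp_winner_succ hs', (ih hs'.le _).2,
        max_eq_left (sub_nonneg.2 hw.le)]
      push_cast
      constructor
      · linarith
      · ring_nf
    · rw [E.seats_succ s hs' i, if_neg hi, E.supp_succ_of_ne hA1 hs' hi]
      exact ih hs'.le i

theorem residual_le_of_lt_seats (hm : ∀ i, P.m i = ⊤) (hA1 : ∀ k, (P.A k).card = 1)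
    (hq : 0 < P.q) {i j : ι} {k : ℕ} (hk : k < E.seats P.n i) :
    P.supp P.v j - E.seats P.n j * P.q ≤ P.supp P.v i - k * P.q := by
  obtain ⟨s, hs, rfl, rfl⟩ := E.exists_seats_eq_of_lt_seats le_rfl hk
  have hsupp := fun i => (E.seats_mul_q_lt_and_supp_eq hm hA1 hq hs.le i).2
  have hseats : (E.seats s j : ℝ) * P.q ≤ E.seats P.n j * P.q :=
    mul_le_mul_of_nonneg_right (by exact_mod_cast E.seats_mono hs.le le_rfl j) hq.le
  calc P.supp P.v j - E.seats P.n j * P.q ≤ P.supp P.v j - E.seats s j * P.q := by linarith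
    _ ≤ P.supp (E.vk s) j := (hsupp j).symm ▸ le_max_left _ _
    _ ≤ P.supp (E.vk s) (E.winner s) := E.supp_le_supp_winner hm hs j
    _ = _ := (hsupp _).trans (max_eq_left (sub_nonneg.2
      (E.seats_winner_mul_q_lt hm hA1 hq hs hsupp).le))

end Exec

end EP

open EP in
/-- if every candidate has unlimited capacity and every vote type approves
exactly one candidate (so the initial vote of a candidate `i` is `P.supp P.v i`), then
any final allocation produced by the Eneström–Phragmén procedure is a largest-remainders
allocation with the Droop quota: with `t i = ⌊v_i / q⌋` and `r i = v_i - t i * q`, either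
(a) `∑ t ≤ n`, every `i` gets at least `t i` seats, and the `n - ∑ t` candidates with
`n_i = t_i + 1` have remainders at least as large as that of any candidate with
`n_j = t_j`; or (b) `∑ t = n + 1` (so all remainders vanish) and every candidate gets
exactly `t i` seats except one candidate `j` with `v_j > 0`, who gets `t j - 1`. -/
theorem enestrom_phragmen_uninominal_parties_largest_remainders
    {ι κ : Type*} [Fintype ι] [DecidableEq ι] [Fintype κ]
    (P : Input ι κ) (henough : P.enough)
    (hm : ∀ i, P.m i = ⊤) (hA1 : ∀ k, (P.A k).card = 1)
    (E : Exec P)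
    (t : ι → ℕ) (ht : ∀ i, t i = ⌊P.supp P.v i / P.q⌋₊)
    (r : ι → ℝ) (hr : ∀ i, r i = P.supp P.v i - t i * P.q) :
    ((∑ i, t i) ≤ P.n ∧
      (∀ i, t i ≤ E.seats P.n i) ∧
      (Finset.univ.filter (fun i => E.seats P.n i = t i + 1)).card = P.n - ∑ i, t i ∧
      (∀ i j : ι, E.seats P.n i = t i + 1 → E.seats P.n j = t j → r j ≤ r i))
    ∨ ((∑ i, t i) = P.n + 1 ∧
      (∀ i, r i = 0) ∧
      ∃ j : ι, 0 < P.supp P.v j ∧ E.seats P.n j + 1 = t j ∧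
        ∀ i, i ≠ j → E.seats P.n i = t i) := by
  have hq := P.q_pos henough
  exact largest_remainders hq P.supp_v_nonneg (P.sum_supp_v hA1) ht hr (E.sum_seats le_rfl)
    (fun i => (E.seats_mul_q_lt_and_supp_eq hm hA1 hq le_rfl i).1)
    (fun _ _ _ hk => E.residual_le_of_lt_seats hm hA1 hq hk)
end

section
/- In any execution of the Eneström–Phragmén procedure, if w_*[s] > q for every step s = 0,…,n−1, then after the n-th allocation the total remaining vote weight satisfies v[n] = Σ_k v_k[n] = q, and w_i[n] = Σ_{k : i∈A_k} v_k[n] ≤ q for every candidate i. Consequently there always exists some s ≤ n with w_*[s] ≤ q (where w_*[n] denotes max_{i∈I[n]} w_i[n]), i.e., p := min{s : w_*[s] ≤ q} satisfies p ≤ n. -/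
/-!
While every winner has more than a quota of support, each seat consumes exactly one quota
of the total vote, so after the `n` seats the remaining total is `V - n q = q`; as weights
stay nonnegative, no candidate's support exceeds the total. If no step `s ≤ n` had all eligible
supports at most `q`, every winner would exceed the quota, and then step `n` would be one.
-/

namespace EP

variable {ι κ : Type*} [Fintype ι] [DecidableEq ι] [Fintype κ] {P : Input ι κ}

namespace Input

lemma q_nonneg_s3 (P : Input ι κ) : 0 ≤ P.q :=
  div_nonneg (Finset.sum_nonneg fun k _ => (P.hv k).le) (by positivity)

lemma V_sub_n_mul_q (P : Input ι κ) : P.V - P.n * P.q = P.q := by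
  have : (P.n : ℝ) + 1 ≠ 0 := by positivity
  rw [q]
  field_simp
  ring

lemma supp_le_sum {u : κ → ℝ} (hu : ∀ k, 0 ≤ u k) (i : ι) : P.supp u i ≤ ∑ k, u k :=
  Finset.sum_le_sum_of_subset_of_nonneg (Finset.filter_subset _ _) fun k _ _ => hu k

end Input

namespace Exec

variable (E : Exec P)

lemma vk_nonneg {s : ℕ} (hs : s ≤ P.n) (k : κ) : 0 ≤ E.vk s k := by
  induction s with
  | zero => rw [E.vk_init]; exact (P.hv k).le
  | succ s ih =>
    have hsn : s < P.n := hs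
    by_cases hk : E.winner s ∈ P.A k
    · by_cases hw : P.q ≤ P.supp (E.vk s) (E.winner s)
      · rw [E.vk_succ_ge s hsn k hk hw]
        have : P.q / P.supp (E.vk s) (E.winner s) ≤ 1 :=
          div_le_one_of_le₀ hw (P.q_nonneg_s3.trans hw)
        exact mul_nonneg (by linarith) (ih hsn.le)
      · rw [E.vk_succ_lt s hsn k hk (not_le.mp hw)]
    · rw [E.vk_succ_out s hsn k hk]
      exact ih hsn.le

lemma sum_vk_succ {s : ℕ} (hs : s < P.n)
    (hw : P.q < P.supp (E.vk s) (E.winner s)) :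
    ∑ k, E.vk (s + 1) k = ∑ k, E.vk s k - P.q := by
  set w := P.supp (E.vk s) (E.winner s) with hw_def
  have hw0 : w ≠ 0 := (P.q_nonneg_s3.trans_lt hw).ne'
  have hstep : ∀ k, E.vk (s + 1) k =
      E.vk s k - if E.winner s ∈ P.A k then P.q / w * E.vk s k else 0 := by
    intro k
    by_cases hk : E.winner s ∈ P.A k
    · rw [if_pos hk, E.vk_succ_ge s hs k hk hw.le]
      ring
    · rw [if_neg hk, E.vk_succ_out s hs k hk, sub_zero]
  have hsupp : ∑ k, (if E.winner s ∈ P.A k then P.q / w * E.vk s k else 0) = P.q := by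
    rw [← Finset.sum_filter, ← Finset.mul_sum, ← Input.supp, ← hw_def,
      div_mul_cancel₀ _ hw0]
  simp only [hstep, Finset.sum_sub_distrib, hsupp]

lemma sum_vk_of_quota_lt (h : ∀ s < P.n, P.q < P.supp (E.vk s) (E.winner s))
    {s : ℕ} (hs : s ≤ P.n) : ∑ k, E.vk s k = P.V - s * P.q := by
  induction s with
  | zero => simp [E.vk_init, Input.V]
  | succ s ih =>
    rw [E.sum_vk_succ hs (h s hs), ih (Nat.le_of_succ_le hs)]
    push_cast
    ring

lemma sum_vk_n_eq_q (h : ∀ s < P.n, P.q < P.supp (E.vk s) (E.winner s)) :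
    ∑ k, E.vk P.n k = P.q := by
  rw [E.sum_vk_of_quota_lt h le_rfl, P.V_sub_n_mul_q]

lemma supp_vk_n_le_q (h : ∀ s < P.n, P.q < P.supp (E.vk s) (E.winner s))
    (i : ι) : P.supp (E.vk P.n) i ≤ P.q :=
  E.sum_vk_n_eq_q h ▸ Input.supp_le_sum (E.vk_nonneg le_rfl) i

end Exec

end EP

open EP in
theorem enestrom_phragmen_wstar_eventually_le_quota_general
    {ι κ : Type*} [Fintype ι] [DecidableEq ι] [Fintype κ]
    (P : Input ι κ) (E : Exec P) :
    ((∀ s < P.n, P.q < P.supp (E.vk s) (E.winner s)) →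
      (∑ k, E.vk P.n k) = P.q ∧ ∀ i : ι, P.supp (E.vk P.n) i ≤ P.q) ∧
    (∃ s ≤ P.n, ∀ i : ι, (E.seats s i : ℕ∞) < P.m i → P.supp (E.vk s) i ≤ P.q) := by
  refine ⟨fun h => ⟨E.sum_vk_n_eq_q h, E.supp_vk_n_le_q h⟩, ?_⟩
  by_contra! hnone
  have hquota : ∀ s < P.n, P.q < P.supp (E.vk s) (E.winner s) := fun s hs => by
    obtain ⟨i, hi, hqi⟩ := hnone s hs.le
    exact hqi.trans_le (E.winner_max s hs i hi)
  obtain ⟨i, -, hqi⟩ := hnone P.n le_rfl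
  exact (E.supp_vk_n_le_q hquota i).not_gt hqi

open EP in
/-- in any execution, if `w_*[s] > q` at every step `s < n`, then the total
remaining weight after the last seat is exactly `q` and every candidate has support at
most `q`.  Consequently, there always exists some `s ≤ n` at which the maximal support
over the eligible candidates is at most `q` (i.e. `p = min {s : w_*[s] ≤ q} ≤ n`). -/
theorem enestrom_phragmen_wstar_eventually_le_quota
    {ι κ : Type*} [Fintype ι] [DecidableEq ι] [Fintype κ]
    (P : Input ι κ) (henough : P.enough) (E : Exec P) :
    ((∀ s < P.n, P.q < P.supp (E.vk s) (E.winner s)) →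
      (∑ k, E.vk P.n k) = P.q ∧ ∀ i : ι, P.supp (E.vk P.n) i ≤ P.q) ∧
    (∃ s ≤ P.n, ∀ i : ι, (E.seats s i : ℕ∞) < P.m i → P.supp (E.vk s) i ≤ P.q) :=
  enestrom_phragmen_wstar_eventually_le_quota_general P E
end

section
/- For any subset J of candidates and any natural number ℓ with ℓ ≤ min(n, m_J), if v_J > ℓ·q then every execution of the Eneström–Phragmén procedure satisfies n_J ≥ ℓ. -/
/-!
The Eneström–Phragmén procedure.

We fix a number of seats `n ≥ 1`, a finite set `ι` of candidates with capacities
`m i ∈ ℕ∞`, a finite set `κ` of vote types, and for each vote type a positive weight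
`v k` and a nonempty approval set `A k`.  The total vote is `V = ∑ k, v k` and the
(Droop) quota is `q = V / (n + 1)`.  An execution of the procedure is recorded by the
vote weights `vk s k` at each step `s`, the seat counts `seats s i`, and the candidate
`winner s` receiving seat `s + 1` (for `s < n`), subject to the rules of the procedure.
-/

namespace EP

section Aux

variable {ι κ : Type*} [Fintype ι] [DecidableEq ι] [Fintype κ] {P : Input ι κ}

theorem q_nonneg (P : Input ι κ) : 0 ≤ P.q :=
  div_nonneg (Finset.sum_nonneg fun k _ => (P.hv k).le) (by positivity)

theorem vk_nonneg (E : Exec P) : ∀ s, s ≤ P.n → ∀ k, 0 ≤ E.vk s k := by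
  intro s
  induction s with
  | zero => intro _ k; rw [E.vk_init]; exact (P.hv k).le
  | succ s ih =>
    intro hs k
    have hsn : s < P.n := hs
    have ih' := ih (le_of_lt hsn)
    by_cases hk : E.winner s ∈ P.A k
    · rcases le_or_gt P.q (P.supp (E.vk s) (E.winner s)) with h | h
      · rw [E.vk_succ_ge s hsn k hk h]
        have hq := q_nonneg P
        have hfac : 0 ≤ 1 - P.q / P.supp (E.vk s) (E.winner s) := by
          rcases lt_or_ge 0 (P.supp (E.vk s) (E.winner s)) with hw0 | hw0
          · have := (div_le_one hw0).2 h
            linarith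
          · have hq0 : P.q = 0 := le_antisymm (h.trans hw0) hq
            simp [hq0]
        exact mul_nonneg hfac (ih' k)
      · rw [E.vk_succ_lt s hsn k hk h]
    · rw [E.vk_succ_out s hsn k hk]; exact ih' k

theorem seats_mono (E : Exec P) (i : ι) :
    ∀ t, t ≤ P.n → ∀ s, s ≤ t → E.seats s i ≤ E.seats t i := by
  intro t
  induction t with
  | zero =>
    intro _ s hs
    have : s = 0 := by omega
    rw [this]
  | succ t ih =>
    intro htn s hs
    have htn' : t < P.n := htn
    rcases Nat.lt_or_ge s (t + 1) with h | h
    · have h1 : E.seats s i ≤ E.seats t i := ih (le_of_lt htn') s (by omega)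
      have h2 : E.seats t i ≤ E.seats (t + 1) i := by
        rw [E.seats_succ t htn' i]; split <;> omega
      omega
    · have hseq : s = t + 1 := le_antisymm hs h
      rw [hseq]

end Aux

end EP

open EP in
/-- Theorem 1 of the paper: for any subset `J` of candidates and any
`ℓ ≤ min (n, m_J)`, if `v_J > ℓ q` then every execution gives `n_J ≥ ℓ`. -/
theorem enestrom_phragmen_droop_proportionality
    {ι κ : Type*} [Fintype ι] [DecidableEq ι] [Fintype κ]
    (P : Input ι κ) (henough : P.enough)
    (J : Finset ι) (ℓ : ℕ) (hℓn : ℓ ≤ P.n) (hℓm : (ℓ : ℕ∞) ≤ ∑ i ∈ J, P.m i)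
    (hvJ : (ℓ : ℝ) * P.q < ∑ k ∈ Finset.univ.filter (fun k => P.A k = J), P.v k)
    (E : Exec P) :
    ℓ ≤ ∑ i ∈ J, E.seats P.n i := by
  by_contra hcon
  push_neg at hcon
  -- abbreviations
  set vJ : ℝ := ∑ k ∈ Finset.univ.filter (fun k => P.A k = J), P.v k with hvJdef
  have hℓ1 : 1 ≤ ℓ := by
    rcases Nat.eq_zero_or_pos ℓ with h | h
    · omega
    · exact h
  have hq0 : 0 ≤ P.q := q_nonneg P
  have hvJpos : 0 < vJ := lt_of_le_of_lt (by positivity) hvJ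
  have hvJV : vJ ≤ P.V := by
    apply Finset.sum_le_sum_of_subset_of_nonneg (Finset.filter_subset _ _)
    intro k _ _; exact (P.hv k).le
  have hVpos : 0 < P.V := lt_of_lt_of_le hvJpos hvJV
  have hqpos : 0 < P.q := div_pos hVpos (by positivity)
  -- final seat count for J
  have hnJmono : ∀ s, s ≤ P.n → (∑ i ∈ J, E.seats s i) ≤ ∑ i ∈ J, E.seats P.n i := by
    intro s hs
    exact Finset.sum_le_sum fun i _ => seats_mono E i P.n le_rfl s hs
  have hnJlt : ∀ s, s ≤ P.n → (∑ i ∈ J, E.seats s i) + 1 ≤ ℓ := by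
    intro s hs
    have := hnJmono s hs
    omega
  -- the main invariant
  have key : ∀ s, s ≤ P.n →
      (∑ k, E.vk s k) = P.V - s * P.q ∧
      vJ - (∑ i ∈ J, E.seats s i) * P.q ≤
        ∑ k ∈ Finset.univ.filter (fun k => P.A k = J), E.vk s k := by
    intro s
    induction s with
    | zero =>
      intro _
      constructor
      · rw [E.vk_init]; simp [Input.V]
      · simp [E.vk_init, E.seats_init, hvJdef]
    | succ s ih =>
      intro hs1
      have hsn : s < P.n := hs1
      obtain ⟨ihT, ihVJ⟩ := ih (le_of_lt hsn)
      have hvknn := vk_nonneg E s (le_of_lt hsn)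
      -- cast of seat-count bound
      have hcast : ((∑ i ∈ J, E.seats s i : ℕ) : ℝ) + 1 ≤ (ℓ : ℝ) := by
        exact_mod_cast hnJlt s (le_of_lt hsn)
      -- current exclusive J-support exceeds the quota
      have hVJq : P.q < ∑ k ∈ Finset.univ.filter (fun k => P.A k = J), E.vk s k := by
        nlinarith [mul_le_mul_of_nonneg_right hcast hq0]
      -- an eligible candidate in J exists
      have hielig : ∃ i ∈ J, (E.seats s i : ℕ∞) < P.m i := by
        by_contra hno
        push_neg at hno
        have h1 : (∑ i ∈ J, P.m i) ≤ ∑ i ∈ J, (E.seats s i : ℕ∞) :=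
          Finset.sum_le_sum fun i hi => hno i hi
        have h2 : (∑ i ∈ J, (E.seats s i : ℕ∞)) = ((∑ i ∈ J, E.seats s i : ℕ) : ℕ∞) := by
          push_cast; rfl
        have h3 : (ℓ : ℕ∞) ≤ ((∑ i ∈ J, E.seats s i : ℕ) : ℕ∞) :=
          le_trans hℓm (h2 ▸ h1)
        have h4 : ℓ ≤ ∑ i ∈ J, E.seats s i := by exact_mod_cast h3
        have := hnJlt s (le_of_lt hsn)
        omega
      obtain ⟨i, hiJ, hielig⟩ := hielig
      -- support comparisons
      have hVJi : (∑ k ∈ Finset.univ.filter (fun k => P.A k = J), E.vk s k) ≤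
          P.supp (E.vk s) i := by
        apply Finset.sum_le_sum_of_subset_of_nonneg
        · intro k hk
          simp only [Finset.mem_filter, Finset.mem_univ, true_and] at hk ⊢
          rw [hk]; exact hiJ
        · intro k _ _; exact hvknn k
      have hVJw : (∑ k ∈ Finset.univ.filter (fun k => P.A k = J), E.vk s k) ≤
          P.supp (E.vk s) (E.winner s) :=
        hVJi.trans (E.winner_max s hsn i hielig)
      have hqw : P.q < P.supp (E.vk s) (E.winner s) := lt_of_lt_of_le hVJq hVJw
      have hwpos : 0 < P.supp (E.vk s) (E.winner s) := lt_of_le_of_lt hq0 hqw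
      -- pointwise formula for the vote update
      have hvk1 : ∀ k, E.vk (s + 1) k = E.vk s k -
          (P.q / P.supp (E.vk s) (E.winner s)) *
            (if E.winner s ∈ P.A k then E.vk s k else 0) := by
        intro k
        by_cases hk : E.winner s ∈ P.A k
        · rw [E.vk_succ_ge s hsn k hk hqw.le, if_pos hk]; ring
        · rw [E.vk_succ_out s hsn k hk, if_neg hk]; ring
      have hsupp_eq : (∑ k, (if E.winner s ∈ P.A k then E.vk s k else 0)) =
          P.supp (E.vk s) (E.winner s) := by
        rw [Input.supp, Finset.sum_filter]
      constructor
      · -- total vote weight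
        have : (∑ k, E.vk (s + 1) k) = (∑ k, E.vk s k) -
            (P.q / P.supp (E.vk s) (E.winner s)) *
              (∑ k, (if E.winner s ∈ P.A k then E.vk s k else 0)) := by
          rw [Finset.mul_sum, ← Finset.sum_sub_distrib]
          exact Finset.sum_congr rfl fun k _ => hvk1 k
        rw [this, hsupp_eq, div_mul_cancel₀ _ (ne_of_gt hwpos), ihT]
        push_cast
        ring
      · -- exclusive J-support
        by_cases hwin : E.winner s ∈ J
        · -- winner in J: seats go up by one, support reduced proportionally
          have hseats : (∑ i ∈ J, E.seats (s + 1) i) = (∑ i ∈ J, E.seats s i) + 1 := by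
            have h1 : ∀ j ∈ J, E.seats (s + 1) j =
                E.seats s j + (if j = E.winner s then 1 else 0) := by
              intro j _
              rw [E.seats_succ s hsn j]
              split <;> simp
            rw [Finset.sum_congr rfl h1, Finset.sum_add_distrib,
              Finset.sum_ite_eq' J (E.winner s) (fun _ => 1), if_pos hwin]
          have hVJ1 : (∑ k ∈ Finset.univ.filter (fun k => P.A k = J), E.vk (s + 1) k) =
              (1 - P.q / P.supp (E.vk s) (E.winner s)) *
                ∑ k ∈ Finset.univ.filter (fun k => P.A k = J), E.vk s k := by
            rw [Finset.mul_sum]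
            apply Finset.sum_congr rfl
            intro k hk
            simp only [Finset.mem_filter, Finset.mem_univ, true_and] at hk
            have hwA : E.winner s ∈ P.A k := by rw [hk]; exact hwin
            exact E.vk_succ_ge s hsn k hwA hqw.le
          rw [hVJ1, hseats, Nat.cast_add, Nat.cast_one]
          have hmul : (P.q / P.supp (E.vk s) (E.winner s)) *
              (∑ k ∈ Finset.univ.filter (fun k => P.A k = J), E.vk s k) ≤ P.q := by
            have h1 : (P.q / P.supp (E.vk s) (E.winner s)) *
                (∑ k ∈ Finset.univ.filter (fun k => P.A k = J), E.vk s k) ≤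
                (P.q / P.supp (E.vk s) (E.winner s)) * P.supp (E.vk s) (E.winner s) :=
              mul_le_mul_of_nonneg_left hVJw (by positivity)
            rwa [div_mul_cancel₀ _ (ne_of_gt hwpos)] at h1
          have hexp : (1 - P.q / P.supp (E.vk s) (E.winner s)) *
              (∑ k ∈ Finset.univ.filter (fun k => P.A k = J), E.vk s k) =
              (∑ k ∈ Finset.univ.filter (fun k => P.A k = J), E.vk s k) -
              (P.q / P.supp (E.vk s) (E.winner s)) *
              (∑ k ∈ Finset.univ.filter (fun k => P.A k = J), E.vk s k) := by ring
          linarith [hmul, ihVJ, hexp]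
        · -- winner not in J: nothing changes for J
          have hseats : (∑ i ∈ J, E.seats (s + 1) i) = ∑ i ∈ J, E.seats s i := by
            apply Finset.sum_congr rfl
            intro j hj
            rw [E.seats_succ s hsn j, if_neg]
            rintro rfl
            exact hwin hj
          have hVJ1 : (∑ k ∈ Finset.univ.filter (fun k => P.A k = J), E.vk (s + 1) k) =
              ∑ k ∈ Finset.univ.filter (fun k => P.A k = J), E.vk s k := by
            apply Finset.sum_congr rfl
            intro k hk
            simp only [Finset.mem_filter, Finset.mem_univ, true_and] at hk
            have hwA : E.winner s ∉ P.A k := by rw [hk]; exact hwin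
            exact E.vk_succ_out s hsn k hwA
          rw [hVJ1, hseats]
          exact ihVJ
  -- conclude
  obtain ⟨hT, hVJ⟩ := key P.n le_rfl
  have hTq : (∑ k, E.vk P.n k) = P.q := by
    rw [hT, Input.q]
    field_simp
    ring
  have hsub : (∑ k ∈ Finset.univ.filter (fun k => P.A k = J), E.vk P.n k) ≤
      ∑ k, E.vk P.n k := by
    apply Finset.sum_le_sum_of_subset_of_nonneg (Finset.filter_subset _ _)
    intro k _ _; exact vk_nonneg E P.n le_rfl k
  have hcast : ((∑ i ∈ J, E.seats P.n i : ℕ) : ℝ) + 1 ≤ (ℓ : ℝ) := by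
    exact_mod_cast hnJlt P.n le_rfl
  nlinarith [mul_le_mul_of_nonneg_right hcast hq0]
end

section
/- Majority preservation: let J be a subset of candidates. If n is odd, m_J ≥ (n+1)/2 and v_J > v/2, then every execution of the Eneström–Phragmén procedure gives n_J > n/2. If n is even, m_J ≥ n/2 and v_J ≥ v/2, then every execution gives n_J ≥ n/2. -/
namespace EPAux
open EP

variable {ι κ : Type*} [Fintype ι] [DecidableEq ι] [Fintype κ] {P : Input ι κ}

lemma q_nonneg : 0 ≤ P.q := by
  apply div_nonneg
  · exact Finset.sum_nonneg fun k _ => (P.hv k).le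
  · positivity

lemma vk_nonneg (E : Exec P) : ∀ s, s ≤ P.n → ∀ k, 0 ≤ E.vk s k := by
  intro s
  induction s with
  | zero => intro _ k; rw [E.vk_init]; exact (P.hv k).le
  | succ s ih =>
    intro hs k
    have hsn : s < P.n := hs
    have ihk := ih hsn.le
    by_cases hk : E.winner s ∈ P.A k
    · rcases lt_or_ge (P.supp (E.vk s) (E.winner s)) P.q with h | h
      · rw [E.vk_succ_lt s hsn k hk h]
      · rw [E.vk_succ_ge s hsn k hk h]
        have hw : (0:ℝ) ≤ P.supp (E.vk s) (E.winner s) := le_trans q_nonneg h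
        exact mul_nonneg (sub_nonneg.2 (div_le_one_of_le₀ h hw)) (ihk k)
    · rw [E.vk_succ_out s hsn k hk]; exact ihk k

lemma seats_mono (E : Exec P) (i : ι) :
    ∀ {s t : ℕ}, s ≤ t → t ≤ P.n → E.seats s i ≤ E.seats t i := by
  intro s t h
  induction h with
  | refl => intro _; exact le_rfl
  | @step m h ih =>
    intro hm
    have h1 : m < P.n := hm
    have h2 := ih h1.le
    rw [E.seats_succ m h1 i]
    split <;> omega

lemma V_pos (P : Input ι κ) (henough : P.enough) : 0 < P.V := by
  have h1 : {i : ι | 0 < P.supp P.v i}.Nonempty := by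
    apply Set.nonempty_of_ncard_ne_zero
    have h : P.n ≤ {i : ι | 0 < P.supp P.v i}.ncard := henough
    have := P.hn
    omega
  obtain ⟨i, hi⟩ := h1
  have h2 : P.supp P.v i ≤ P.V := by
    apply Finset.sum_le_sum_of_subset_of_nonneg (Finset.filter_subset _ _)
    intro k _ _; exact (P.hv k).le
  exact lt_of_lt_of_le hi h2

end EPAux

namespace EPAux
open EP

variable {ι κ : Type*} [Fintype ι] [DecidableEq ι] [Fintype κ]

lemma key (P : Input ι κ) (J : Finset ι) (E : Exec P) (hV : 0 < P.V) (T : ℕ)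
    (hT : (T : ℕ∞) < ∑ i ∈ J, P.m i)
    (ht : ∑ i ∈ J, E.seats P.n i ≤ T)
    (hnum : ((T : ℝ) + 1) * P.q ≤ ∑ k ∈ Finset.univ.filter (fun k => P.A k = J), P.v k) :
    ((P.n : ℝ) - ((∑ i ∈ J, E.seats P.n i : ℕ) : ℝ)) * P.q
      ≤ P.V - ∑ k ∈ Finset.univ.filter (fun k => P.A k = J), P.v k := by
  set vJ := ∑ k ∈ Finset.univ.filter (fun k => P.A k = J), P.v k with hvJ
  have hq0 : 0 ≤ P.q := q_nonneg
  have hqpos : 0 < P.q := div_pos hV (by positivity)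
  have hjmono : ∀ s, s ≤ P.n → ∑ i ∈ J, E.seats s i ≤ T := fun s hs =>
    le_trans (Finset.sum_le_sum fun i _ => seats_mono E i hs le_rfl) ht
  have main : ∀ s, s ≤ P.n →
      (vJ - ((∑ i ∈ J, E.seats s i : ℕ) : ℝ) * P.q
          ≤ ∑ k ∈ Finset.univ.filter (fun k => P.A k = J), E.vk s k) ∧
      ((∑ k, E.vk s k) - (∑ k ∈ Finset.univ.filter (fun k => P.A k = J), E.vk s k)
          + ((s : ℝ) - ((∑ i ∈ J, E.seats s i : ℕ) : ℝ)) * P.q ≤ P.V - vJ) := by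
    intro s
    induction s with
    | zero =>
      intro _
      simp only [E.vk_init, E.seats_init, Finset.sum_const_zero, Nat.cast_zero]
      constructor
      · simp [hvJ]
      · have : (∑ k, P.v k) = P.V := rfl
        rw [this]; simp; linarith [hvJ]
    | succ s ih =>
      intro hs
      have hsn : s < P.n := hs
      obtain ⟨ih1, ih2⟩ := ih hsn.le
      push_cast at ih1 ih2
      have hnn : ∀ k, 0 ≤ E.vk s k := vk_nonneg E s hsn.le
      -- there is an eligible candidate in J
      have helig : ∃ i ∈ J, (E.seats s i : ℕ∞) < P.m i := by
        by_contra hcon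
        push_neg at hcon
        have h1 : ∑ i ∈ J, P.m i ≤ ∑ i ∈ J, ((E.seats s i : ℕ) : ℕ∞) :=
          Finset.sum_le_sum fun i hi => hcon i hi
        have h2 : ∑ i ∈ J, ((E.seats s i : ℕ) : ℕ∞) = (((∑ i ∈ J, E.seats s i : ℕ)) : ℕ∞) :=
          (Nat.cast_sum J (E.seats s)).symm
        have h3 : (((∑ i ∈ J, E.seats s i : ℕ)) : ℕ∞) ≤ (T : ℕ∞) :=
          Nat.cast_le.mpr (hjmono s hsn.le)
        exact absurd hT (not_lt.mpr (h1.trans (h2 ▸ h3)))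
      obtain ⟨i0, hi0J, hi0⟩ := helig
      -- bloc weight is below the support of any member of J
      have hBsupp : ∀ i ∈ J,
          (∑ k ∈ Finset.univ.filter (fun k => P.A k = J), E.vk s k) ≤ P.supp (E.vk s) i := by
        intro i hi
        apply Finset.sum_le_sum_of_subset_of_nonneg
        · intro k hk
          simp only [Finset.mem_filter, Finset.mem_univ, true_and] at hk ⊢
          rw [hk]; exact hi
        · intro k _ _; exact hnn k
      set w := P.supp (E.vk s) (E.winner s) with hw
      have hBw : (∑ k ∈ Finset.univ.filter (fun k => P.A k = J), E.vk s k) ≤ w :=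
        le_trans (hBsupp i0 hi0J) (E.winner_max s hsn i0 hi0)
      have hqB : P.q ≤ ∑ k ∈ Finset.univ.filter (fun k => P.A k = J), E.vk s k := by
        have h1 : ((∑ i ∈ J, E.seats s i : ℕ) : ℝ) ≤ (T : ℝ) :=
          Nat.cast_le.mpr (hjmono s hsn.le)
        push_cast at h1
        nlinarith [mul_le_mul_of_nonneg_right h1 hq0, ih1, hnum]
      have hqw : P.q ≤ w := hqB.trans hBw
      have hwpos : 0 < w := lt_of_lt_of_le hqpos hqw
      -- total weight drops by exactly q
      have htots : (∑ k, E.vk (s+1) k) = (∑ k, E.vk s k) - P.q := by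
        have hsplit : ∀ u : κ → ℝ, (∑ k, u k) =
            (∑ k ∈ Finset.univ.filter (fun k => E.winner s ∈ P.A k), u k)
            + (∑ k ∈ Finset.univ.filter (fun k => ¬ E.winner s ∈ P.A k), u k) :=
          fun u => (Finset.sum_filter_add_sum_filter_not _ _ _).symm
        rw [hsplit (E.vk (s+1)), hsplit (E.vk s)]
        have h1 : ∑ k ∈ Finset.univ.filter (fun k => E.winner s ∈ P.A k), E.vk (s+1) k
            = w - P.q := by
          have hcg : ∀ k ∈ Finset.univ.filter (fun k => E.winner s ∈ P.A k),
              E.vk (s+1) k = (1 - P.q / w) * E.vk s k := by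
            intro k hk
            simp only [Finset.mem_filter, Finset.mem_univ, true_and] at hk
            exact E.vk_succ_ge s hsn k hk hqw
          rw [Finset.sum_congr rfl hcg, ← Finset.mul_sum]
          have hsupp : ∑ k ∈ Finset.univ.filter (fun k => E.winner s ∈ P.A k), E.vk s k = w := rfl
          rw [hsupp, sub_mul, one_mul, div_mul_cancel₀ _ hwpos.ne']
        have h2 : ∀ k ∈ Finset.univ.filter (fun k => ¬ E.winner s ∈ P.A k),
            E.vk (s+1) k = E.vk s k := by
          intro k hk
          simp only [Finset.mem_filter, Finset.mem_univ, true_and] at hk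
          exact E.vk_succ_out s hsn k hk
        rw [h1, Finset.sum_congr rfl h2]
        have hsupp2 : ∑ k ∈ Finset.univ.filter (fun k => E.winner s ∈ P.A k), E.vk s k = w := rfl
        rw [hsupp2]
        ring
      by_cases hwin : E.winner s ∈ J
      · -- winner in J
        have hB1 : (∑ k ∈ Finset.univ.filter (fun k => P.A k = J), E.vk (s+1) k)
            = (1 - P.q / w) * ∑ k ∈ Finset.univ.filter (fun k => P.A k = J), E.vk s k := by
          rw [Finset.mul_sum]
          apply Finset.sum_congr rfl
          intro k hk
          simp only [Finset.mem_filter, Finset.mem_univ, true_and] at hk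
          exact E.vk_succ_ge s hsn k (by rw [hk]; exact hwin) hqw
        have hj1 : (∑ i ∈ J, E.seats (s+1) i) = (∑ i ∈ J, E.seats s i) + 1 := by
          have hcg : ∀ i ∈ J, E.seats (s+1) i
              = E.seats s i + (if i = E.winner s then 1 else 0) := by
            intro i _; rw [E.seats_succ s hsn i]; split <;> simp
          rw [Finset.sum_congr rfl hcg, Finset.sum_add_distrib]
          congr 1
          rw [Finset.sum_ite_eq' J (E.winner s) (fun _ => 1)]
          simp [hwin]
        have hfrac : P.q / w * (∑ k ∈ Finset.univ.filter (fun k => P.A k = J), E.vk s k)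
            ≤ P.q := by
          have h := mul_le_mul_of_nonneg_left hBw (div_nonneg hq0 hwpos.le)
          rwa [div_mul_cancel₀ _ hwpos.ne'] at h
        constructor
        · rw [hB1, hj1]
          push_cast
          linarith [ih1, hfrac]
        · rw [htots, hB1, hj1]
          push_cast
          linarith [ih2, hfrac]

      · -- winner not in J
        have hB1 : (∑ k ∈ Finset.univ.filter (fun k => P.A k = J), E.vk (s+1) k)
            = ∑ k ∈ Finset.univ.filter (fun k => P.A k = J), E.vk s k := by
          apply Finset.sum_congr rfl
          intro k hk
          simp only [Finset.mem_filter, Finset.mem_univ, true_and] at hk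
          exact E.vk_succ_out s hsn k (by rw [hk]; exact hwin)
        have hj1 : (∑ i ∈ J, E.seats (s+1) i) = ∑ i ∈ J, E.seats s i := by
          apply Finset.sum_congr rfl
          intro i hi
          rw [E.seats_succ s hsn i]
          rw [if_neg]
          intro h; exact hwin (h ▸ hi)
        constructor
        · rw [hB1, hj1]; push_cast; linarith [ih1]
        · rw [htots, hB1, hj1]
          push_cast
          linarith [ih2]
  obtain ⟨-, h2⟩ := main P.n le_rfl
  have hNn : 0 ≤ (∑ k, E.vk P.n k)
      - ∑ k ∈ Finset.univ.filter (fun k => P.A k = J), E.vk P.n k := by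
    have hsp := Finset.sum_filter_add_sum_filter_not Finset.univ (fun k => P.A k = J) (E.vk P.n)
    have hpos : 0 ≤ ∑ k ∈ Finset.univ.filter (fun k => ¬ P.A k = J), E.vk P.n k :=
      Finset.sum_nonneg fun k _ => vk_nonneg E P.n le_rfl k
    linarith
  linarith [h2, hNn]

end EPAux

open EP in
/-- majority preservation: let `J` be a subset of candidates.
If `n` is odd, `m_J ≥ (n+1)/2` and `v_J > v/2`, then every execution gives `n_J > n/2`;
if `n` is even, `m_J ≥ n/2` and `v_J ≥ v/2`, then every execution gives `n_J ≥ n/2`. -/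
theorem enestrom_phragmen_majority_preservation
    {ι κ : Type*} [Fintype ι] [DecidableEq ι] [Fintype κ]
    (P : Input ι κ) (henough : P.enough) (J : Finset ι) (E : Exec P) :
    (Odd P.n → (((P.n + 1) / 2 : ℕ) : ℕ∞) ≤ ∑ i ∈ J, P.m i →
      P.V / 2 < (∑ k ∈ Finset.univ.filter (fun k => P.A k = J), P.v k) →
      (P.n : ℝ) / 2 < ((∑ i ∈ J, E.seats P.n i : ℕ) : ℝ)) ∧
    (Even P.n → ((P.n / 2 : ℕ) : ℕ∞) ≤ ∑ i ∈ J, P.m i →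
      P.V / 2 ≤ (∑ k ∈ Finset.univ.filter (fun k => P.A k = J), P.v k) →
      (P.n : ℝ) / 2 ≤ ((∑ i ∈ J, E.seats P.n i : ℕ) : ℝ)) := by
  have hV : 0 < P.V := EPAux.V_pos P henough
  have hq : 0 < P.q := div_pos hV (by positivity)
  have hq' : P.q = P.V / ((P.n : ℝ) + 1) := rfl
  have hd : ((P.n : ℝ) + 1) ≠ 0 := by positivity
  have hqeq : P.q * ((P.n : ℝ) + 1) = P.V := by rw [hq']; exact div_mul_cancel₀ _ hd
  constructor
  · -- odd case
    intro hodd hm hv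
    obtain ⟨c, hc⟩ := hodd
    have hnR : (P.n : ℝ) = 2 * (c : ℝ) + 1 := by exact_mod_cast hc
    by_contra hcon
    push_neg at hcon
    have hjn : 2 * ((∑ i ∈ J, E.seats P.n i : ℕ) : ℝ) ≤ 2 * (c : ℝ) + 1 := by
      rw [hnR] at hcon; linarith
    have hjc : ∑ i ∈ J, E.seats P.n i ≤ c := by
      have h4 : 2 * (∑ i ∈ J, E.seats P.n i) ≤ 2 * c + 1 := by exact_mod_cast hjn
      omega
    have h6 : ((P.n + 1) / 2 : ℕ) = c + 1 := by omega
    rw [h6] at hm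
    have hT : ((c : ℕ) : ℕ∞) < ∑ i ∈ J, P.m i :=
      lt_of_lt_of_le (by exact_mod_cast Nat.lt_succ_self c) hm
    rw [hnR] at hqeq
    have hnum : (((c : ℕ) : ℝ) + 1) * P.q ≤ ∑ k ∈ Finset.univ.filter (fun k => P.A k = J), P.v k := by
      nlinarith [hqeq, hv]
    have hkey := EPAux.key P J E hV c hT hjc hnum
    rw [hnR] at hkey
    have hjR : ((∑ i ∈ J, E.seats P.n i : ℕ) : ℝ) ≤ (c : ℝ) := by exact_mod_cast hjc
    nlinarith [hkey, mul_le_mul_of_nonneg_right hjR hq.le, hqeq, hv, hq]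
  · -- even case
    intro heven hm hv
    obtain ⟨c, hc0⟩ := heven
    have hc : P.n = 2 * c := by omega
    have hcge1 : 1 ≤ c := by have := P.hn; omega
    have hnR : (P.n : ℝ) = 2 * (c : ℝ) := by exact_mod_cast hc
    by_contra hcon
    push_neg at hcon
    have hjlt : ((∑ i ∈ J, E.seats P.n i : ℕ) : ℝ) < (c : ℝ) := by
      rw [hnR] at hcon; linarith
    have hjc' : ∑ i ∈ J, E.seats P.n i < c := by exact_mod_cast hjlt
    have hjc : ∑ i ∈ J, E.seats P.n i ≤ c - 1 := by omega
    have h6 : (P.n / 2 : ℕ) = c := by omega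
    rw [h6] at hm
    have hT : (((c - 1 : ℕ)) : ℕ∞) < ∑ i ∈ J, P.m i :=
      lt_of_lt_of_le (by exact_mod_cast (by omega : c - 1 < c)) hm
    rw [hnR] at hqeq
    have hc1R : (((c - 1 : ℕ)) : ℝ) = (c : ℝ) - 1 := by
      rw [Nat.cast_sub hcge1]; norm_num
    have hnum : (((c - 1 : ℕ) : ℝ) + 1) * P.q ≤ ∑ k ∈ Finset.univ.filter (fun k => P.A k = J), P.v k := by
      rw [hc1R]
      nlinarith [hqeq, hv, hq.le]
    have hkey := EPAux.key P J E hV (c - 1) hT hjc hnum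
    rw [hnR] at hkey
    have hjR : ((∑ i ∈ J, E.seats P.n i : ℕ) : ℝ) ≤ (c : ℝ) - 1 := by
      have h5 : (∑ i ∈ J, E.seats P.n i) + 1 ≤ c := by omega
      have h7 : ((∑ i ∈ J, E.seats P.n i : ℕ) : ℝ) + 1 ≤ (c : ℝ) := by exact_mod_cast h5
      linarith
    nlinarith [hkey, mul_le_mul_of_nonneg_right hjR hq.le, hqeq, hv, hq]
end

section
/- Majority preservation for cooperative supports: let J be a subset of candidates. If n is odd, m_J ≥ (n+1)/2 and y_J > v/2, then every execution of the Eneström–Phragmén procedure gives n_{J*} > n/2. If n is even, m_J ≥ n/2 and y_J ≥ v/2, then every execution gives n_{J*} ≥ n/2. -/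
section EPaux

open Finset

variable {ι κ : Type*} [Fintype ι] [DecidableEq ι] [Fintype κ]

lemma EP_V_pos (P : EP.Input ι κ) (henough : P.enough) : 0 < P.V := by
  have h1 : 1 ≤ {i : ι | 0 < P.supp P.v i}.ncard := le_trans P.hn henough
  have hne : {i : ι | 0 < P.supp P.v i}.Nonempty := by
    rcases Set.eq_empty_or_nonempty {i : ι | 0 < P.supp P.v i} with h | h
    · rw [h] at h1; simp at h1
    · exact h
  obtain ⟨i, hi⟩ := hne
  have h2 : P.supp P.v i ≤ P.V := by
    refine Finset.sum_le_sum_of_subset_of_nonneg (Finset.filter_subset _ _) ?_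
    intro k _ _; exact (P.hv k).le
  exact lt_of_lt_of_le hi h2

lemma EP_q_pos (P : EP.Input ι κ) (henough : P.enough) : 0 < P.q := by
  have h1 := EP_V_pos P henough
  unfold EP.Input.q
  positivity

lemma EP_vk_nonneg (P : EP.Input ι κ) (E : EP.Exec P) (hq : 0 < P.q) :
    ∀ s, s ≤ P.n → ∀ k, 0 ≤ E.vk s k := by
  intro s
  induction s with
  | zero => intro _ k; rw [E.vk_init]; exact (P.hv k).le
  | succ s ih =>
    intro hs k
    have hsn : s < P.n := hs
    have h0 := ih hsn.le
    by_cases hk : E.winner s ∈ P.A k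
    · by_cases hw : P.q ≤ P.supp (E.vk s) (E.winner s)
      · rw [E.vk_succ_ge s hsn k hk hw]
        have hwpos : 0 < P.supp (E.vk s) (E.winner s) := lt_of_lt_of_le hq hw
        have h2 : P.q / P.supp (E.vk s) (E.winner s) ≤ 1 := by
          rw [div_le_one hwpos]; exact hw
        have h3 := h0 k
        nlinarith
      · rw [E.vk_succ_lt s hsn k hk (lt_of_not_ge hw)]
    · rw [E.vk_succ_out s hsn k hk]; exact h0 k

lemma EP_vk_mono (P : EP.Input ι κ) (E : EP.Exec P) (hq : 0 < P.q) :
    ∀ s, s < P.n → ∀ k, E.vk (s + 1) k ≤ E.vk s k := by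
  intro s hsn k
  have h0 : 0 ≤ E.vk s k := EP_vk_nonneg P E hq s hsn.le k
  by_cases hk : E.winner s ∈ P.A k
  · by_cases hw : P.q ≤ P.supp (E.vk s) (E.winner s)
    · rw [E.vk_succ_ge s hsn k hk hw]
      have hwpos : 0 < P.supp (E.vk s) (E.winner s) := lt_of_lt_of_le hq hw
      have h2 : 0 ≤ P.q / P.supp (E.vk s) (E.winner s) := by positivity
      nlinarith
    · rw [E.vk_succ_lt s hsn k hk (lt_of_not_ge hw)]; exact h0
  · rw [E.vk_succ_out s hsn k hk]

lemma EP_key (P : EP.Input ι κ) (henough : P.enough) (J : Finset ι) (E : EP.Exec P)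
    (c : ℕ) (hc1 : 1 ≤ c) (hcn : c ≤ P.n)
    (hcm : (c : ℕ∞) ≤ ∑ i ∈ J, P.m i)
    (hy : (c : ℝ) * P.q ≤ ∑ k ∈ Finset.univ.filter (fun k => J ⊆ P.A k), P.v k)
    (hz : P.V - (∑ k ∈ Finset.univ.filter (fun k => J ⊆ P.A k), P.v k)
        < ((P.n - c + 1 : ℕ) : ℝ) * P.q) :
    c ≤ ∑ i ∈ Finset.univ.filter (fun i => ∃ k, J ⊆ P.A k ∧ i ∈ P.A k),
        E.seats P.n i := by
  have hq := EP_q_pos P henough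
  have hnn := EP_vk_nonneg P E hq
  set Jv : Finset κ := Finset.univ.filter (fun k => J ⊆ P.A k) with hJv
  set Zf : Finset κ := Finset.univ.filter (fun k => ¬ J ⊆ P.A k) with hZf
  set Jstar : Finset ι := Finset.univ.filter (fun i => ∃ k, J ⊆ P.A k ∧ i ∈ P.A k)
    with hJstar
  set Y : ℝ := ∑ k ∈ Jv, P.v k with hYdef
  have hYpos : 0 < Y := lt_of_lt_of_le (by positivity : (0:ℝ) < (c : ℝ) * P.q) hy
  have hJvne : Jv.Nonempty := by
    by_contra h
    rw [Finset.not_nonempty_iff_eq_empty] at h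
    rw [hYdef, h, Finset.sum_empty] at hYpos
    exact lt_irrefl _ hYpos
  have hJJstar : J ⊆ Jstar := by
    obtain ⟨k0, hk0⟩ := hJvne
    rw [hJv, Finset.mem_filter] at hk0
    intro i hi
    rw [hJstar, Finset.mem_filter]
    exact ⟨Finset.mem_univ i, k0, hk0.2, hk0.2 hi⟩
  -- the main invariant
  have main : ∀ s, s ≤ P.n →
      (Y - ((∑ i ∈ Jstar, E.seats s i : ℕ) : ℝ) * P.q ≤ ∑ k ∈ Jv, E.vk s k) ∧
      ((∑ i ∈ Jstar, E.seats s i) < c →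
        ∑ k ∈ Zf, E.vk s k ≤ (P.V - Y)
          - ((s : ℝ) - ((∑ i ∈ Jstar, E.seats s i : ℕ) : ℝ)) * P.q) := by
    intro s
    induction s with
    | zero =>
      intro _
      have ht0 : ∑ i ∈ Jstar, E.seats 0 i = 0 := by simp [E.seats_init]
      have hz0 : ∑ k ∈ Zf, E.vk 0 k = P.V - Y := by
        rw [E.vk_init]
        have := Finset.sum_filter_add_sum_filter_not Finset.univ
          (fun k => J ⊆ P.A k) P.v
        rw [hZf, hYdef, hJv]
        rw [EP.Input.V]
        linarith [this]
      constructor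
      · rw [ht0, E.vk_init]; push_cast; simp; exact hYdef.le
      · intro _; rw [ht0, hz0]; push_cast; simp
    | succ s ih =>
      intro hs1
      have hsn : s < P.n := hs1
      obtain ⟨ih1, ih2⟩ := ih hsn.le
      set w := P.supp (E.vk s) (E.winner s) with hw
      set D : κ → ℝ := fun k => E.vk s k - E.vk (s + 1) k with hD
      have hDnn : ∀ k, 0 ≤ D k := fun k => by
        have := EP_vk_mono P E hq s hsn k; rw [hD]; simpa using this
      have hDzero : ∀ k, E.winner s ∉ P.A k → D k = 0 := by
        intro k hk; rw [hD]; simp [E.vk_succ_out s hsn k hk]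
      -- total consumption over winner-approvers
      have hWuniv : ∑ k, D k
          = ∑ k ∈ Finset.univ.filter (fun k => E.winner s ∈ P.A k), D k := by
        refine (Finset.sum_subset (Finset.filter_subset _ _) ?_).symm
        intro k _ hk
        rw [Finset.mem_filter] at hk
        exact hDzero k (fun h => hk ⟨Finset.mem_univ k, h⟩)
      have hDWeq : P.q ≤ w →
          ∑ k ∈ Finset.univ.filter (fun k => E.winner s ∈ P.A k), D k = P.q := by
        intro hwq
        have hwpos : 0 < w := lt_of_lt_of_le hq hwq
        have hterm : ∀ k ∈ Finset.univ.filter (fun k => E.winner s ∈ P.A k),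
            D k = (P.q / w) * E.vk s k := by
          intro k hk
          rw [Finset.mem_filter] at hk
          rw [hD]
          simp only
          rw [E.vk_succ_ge s hsn k hk.2 hwq]
          ring
        rw [Finset.sum_congr rfl hterm, ← Finset.mul_sum]
        have hsupp : ∑ k ∈ Finset.univ.filter (fun k => E.winner s ∈ P.A k),
            E.vk s k = w := rfl
        rw [hsupp, div_mul_cancel₀ _ (ne_of_gt hwpos)]
      have hDWle :
          ∑ k ∈ Finset.univ.filter (fun k => E.winner s ∈ P.A k), D k ≤ P.q := by
        by_cases hwq : P.q ≤ w
        · exact le_of_eq (hDWeq hwq)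
        · push_neg at hwq
          have hterm : ∀ k ∈ Finset.univ.filter (fun k => E.winner s ∈ P.A k),
              D k = E.vk s k := by
            intro k hk
            rw [Finset.mem_filter] at hk
            rw [hD]
            simp only
            rw [E.vk_succ_lt s hsn k hk.2 hwq]
            ring
          rw [Finset.sum_congr rfl hterm]
          exact le_of_lt hwq
      have hy_step : ∑ k ∈ Jv, E.vk (s + 1) k
          = (∑ k ∈ Jv, E.vk s k) - ∑ k ∈ Jv, D k := by
        rw [← Finset.sum_sub_distrib]
        exact Finset.sum_congr rfl fun k _ => by simp [hD]
      have hz_step : ∑ k ∈ Zf, E.vk (s + 1) k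
          = (∑ k ∈ Zf, E.vk s k) - ∑ k ∈ Zf, D k := by
        rw [← Finset.sum_sub_distrib]
        exact Finset.sum_congr rfl fun k _ => by simp [hD]
      have hseat : ∀ i, E.seats (s + 1) i
          = E.seats s i + (if i = E.winner s then 1 else 0) := by
        intro i; rw [E.seats_succ s hsn i]; split_ifs <;> simp
      have hts : ∑ i ∈ Jstar, E.seats (s + 1) i
          = (∑ i ∈ Jstar, E.seats s i) + (if E.winner s ∈ Jstar then 1 else 0) := by
        rw [Finset.sum_congr rfl (fun i _ => hseat i), Finset.sum_add_distrib,
          Finset.sum_ite_eq' Jstar (E.winner s) (fun _ => 1)]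
      by_cases hwin : E.winner s ∈ Jstar
      · -- winner in J*: y loses at most q, seat count in J* goes up
        rw [hts, if_pos hwin]
        have hJvD : ∑ k ∈ Jv, D k ≤ P.q := by
          refine le_trans ?_ hDWle
          rw [← hWuniv]
          exact Finset.sum_le_sum_of_subset_of_nonneg (Finset.subset_univ _)
            (fun k _ _ => hDnn k)
        constructor
        · rw [hy_step]; push_cast; push_cast at ih1; linarith
        · intro hlt
          have hlt' : ∑ i ∈ Jstar, E.seats s i < c := by omega
          have h2 := ih2 hlt'
          have hZD : 0 ≤ ∑ k ∈ Zf, D k :=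
            Finset.sum_nonneg (fun k _ => hDnn k)
          rw [hz_step]; push_cast; push_cast at h2; linarith
      · -- winner not in J*: J-votes untouched; winner consumes q from non-J votes
        rw [hts, if_neg hwin]
        simp only [Nat.add_zero]
        have hnotA : ∀ k ∈ Jv, E.winner s ∉ P.A k := by
          intro k hk hA
          rw [hJv, Finset.mem_filter] at hk
          exact hwin (by
            rw [hJstar, Finset.mem_filter]
            exact ⟨Finset.mem_univ _, k, hk.2, hA⟩)
        have hJvD0 : ∑ k ∈ Jv, D k = 0 :=
          Finset.sum_eq_zero (fun k hk => hDzero k (hnotA k hk))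
        constructor
        · rw [hy_step, hJvD0]; linarith
        · intro hlt
          have h2 := ih2 hlt
          -- y s ≥ q
          have htsc : ((∑ i ∈ Jstar, E.seats s i : ℕ) : ℝ) ≤ (c : ℝ) - 1 := by
            have h1 : (∑ i ∈ Jstar, E.seats s i) + 1 ≤ c := hlt
            have h1' : ((∑ i ∈ Jstar, E.seats s i : ℕ) : ℝ) + 1 ≤ (c : ℝ) := by
              exact_mod_cast h1
            linarith
          have hysq : P.q ≤ ∑ k ∈ Jv, E.vk s k := by
            have : Y - ((c : ℝ) - 1) * P.q ≤ ∑ k ∈ Jv, E.vk s k := by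
              nlinarith [ih1, htsc, hq.le]
            nlinarith [hy]
          -- there is an eligible candidate in J
          have helig : ∃ i ∈ J, (E.seats s i : ℕ∞) < P.m i := by
            by_contra h
            push_neg at h
            have h1 : (∑ i ∈ J, P.m i) ≤ ∑ i ∈ J, (E.seats s i : ℕ∞) :=
              Finset.sum_le_sum h
            have h2' : ∑ i ∈ J, (E.seats s i : ℕ∞)
                = ((∑ i ∈ J, E.seats s i : ℕ) : ℕ∞) := by
              rw [Nat.cast_sum]
            have h3 : (∑ i ∈ J, E.seats s i) ≤ ∑ i ∈ Jstar, E.seats s i :=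
              Finset.sum_le_sum_of_subset hJJstar
            have h4 : (c : ℕ∞) ≤ ((∑ i ∈ J, E.seats s i : ℕ) : ℕ∞) :=
              le_trans hcm (h2' ▸ h1)
            rw [Nat.cast_le] at h4
            omega
          obtain ⟨i0, hi0J, hi0e⟩ := helig
          have hsuppi : ∑ k ∈ Jv, E.vk s k ≤ P.supp (E.vk s) i0 := by
            refine Finset.sum_le_sum_of_subset_of_nonneg ?_
              (fun k _ _ => hnn s hsn.le k)
            intro k hk
            rw [hJv, Finset.mem_filter] at hk
            exact Finset.mem_filter.2 ⟨Finset.mem_univ _, hk.2 hi0J⟩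
          have hwq : P.q ≤ w :=
            le_trans hysq (le_trans hsuppi (E.winner_max s hsn i0 hi0e))
          -- all consumption comes from Zf
          have hZfD : ∑ k ∈ Zf, D k = P.q := by
            rw [← hDWeq hwq, hWuniv.symm]
            refine Finset.sum_subset (Finset.subset_univ _) ?_
            intro k _ hk
            rw [hZf, Finset.mem_filter] at hk
            have hkJv : k ∈ Jv := by
              rw [hJv, Finset.mem_filter]
              constructor
              · exact Finset.mem_univ k
              · by_contra h
                exact hk ⟨Finset.mem_univ k, h⟩
            exact hDzero k (hnotA k hkJv)
          rw [hz_step, hZfD]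
          push_cast
          push_cast at h2
          linarith
  -- conclude
  by_contra hcon
  push_neg at hcon
  have h2 := (main P.n le_rfl).2 hcon
  have hzn : 0 ≤ ∑ k ∈ Zf, E.vk P.n k :=
    Finset.sum_nonneg (fun k _ => hnn P.n le_rfl k)
  have htc : ((∑ i ∈ Jstar, E.seats P.n i : ℕ) : ℝ) ≤ (c : ℝ) - 1 := by
    have h1 : (∑ i ∈ Jstar, E.seats P.n i) + 1 ≤ c := hcon
    have h1' : ((∑ i ∈ Jstar, E.seats P.n i : ℕ) : ℝ) + 1 ≤ (c : ℝ) := by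
      exact_mod_cast h1
    linarith
  have hcast : ((P.n - c + 1 : ℕ) : ℝ) = (P.n : ℝ) - (c : ℝ) + 1 := by
    push_cast [Nat.cast_sub hcn]
    ring
  rw [hcast] at hz
  nlinarith [h2, hzn, htc, hq, mul_nonneg (sub_nonneg.2 htc) hq.le]

end EPaux

open EP in
/-- majority preservation for cooperative supports: let `J` be a subset
of candidates.  If `n` is odd, `m_J ≥ (n+1)/2` and `y_J > v/2`, then every execution
gives `n_{J*} > n/2`; if `n` is even, `m_J ≥ n/2` and `y_J ≥ v/2`, then every execution
gives `n_{J*} ≥ n/2`.  Here `y_J` is the total weight of the votes approving all of `J`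
and `J* = ⋃ {A_k : A_k ⊇ J}`. -/
theorem enestrom_phragmen_majority_preservation_cooperative
    {ι κ : Type*} [Fintype ι] [DecidableEq ι] [Fintype κ]
    (P : Input ι κ) (henough : P.enough) (J : Finset ι) (E : Exec P) :
    (Odd P.n → (((P.n + 1) / 2 : ℕ) : ℕ∞) ≤ ∑ i ∈ J, P.m i →
      P.V / 2 < (∑ k ∈ Finset.univ.filter (fun k => J ⊆ P.A k), P.v k) →
      (P.n : ℝ) / 2 <
        ((∑ i ∈ Finset.univ.filter (fun i => ∃ k, J ⊆ P.A k ∧ i ∈ P.A k),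
            E.seats P.n i : ℕ) : ℝ)) ∧
    (Even P.n → ((P.n / 2 : ℕ) : ℕ∞) ≤ ∑ i ∈ J, P.m i →
      P.V / 2 ≤ (∑ k ∈ Finset.univ.filter (fun k => J ⊆ P.A k), P.v k) →
      (P.n : ℝ) / 2 ≤
        ((∑ i ∈ Finset.univ.filter (fun i => ∃ k, J ⊆ P.A k ∧ i ∈ P.A k),
            E.seats P.n i : ℕ) : ℝ)) := by
  have hq := EP_q_pos P henough
  have hVq : P.V = ((P.n : ℝ) + 1) * P.q := by
    rw [EP.Input.q]
    field_simp
  constructor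
  · intro hodd hm hY
    obtain ⟨m, hm'⟩ := hodd
    have hn2 : P.n = 2 * m + 1 := by omega
    have hnr : (P.n : ℝ) = 2 * (m : ℝ) + 1 := by rw [hn2]; push_cast; ring
    have hc : (P.n + 1) / 2 = m + 1 := by omega
    have hsub : P.n - (m + 1) + 1 = m + 1 := by omega
    have key := EP_key P henough J E (m + 1) (by omega) (by omega)
      (by rw [← hc]; exact hm)
      (by push_cast; nlinarith)
      (by rw [hsub]; push_cast; nlinarith)
    have key' : ((m : ℝ) + 1) ≤
        ((∑ i ∈ Finset.univ.filter (fun i => ∃ k, J ⊆ P.A k ∧ i ∈ P.A k),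
          E.seats P.n i : ℕ) : ℝ) := by exact_mod_cast key
    rw [hnr]
    linarith
  · intro heven hm hY
    obtain ⟨m, hm'⟩ := heven
    have hn2 : P.n = 2 * m := by omega
    have hm1 : 1 ≤ m := by have := P.hn; omega
    have hnr : (P.n : ℝ) = 2 * (m : ℝ) := by rw [hn2]; push_cast; ring
    have hc : P.n / 2 = m := by omega
    have hsub : P.n - m + 1 = m + 1 := by omega
    have key := EP_key P henough J E m (by omega) (by omega)
      (by rw [← hc]; exact hm)
      (by nlinarith)
      (by rw [hsub]; push_cast; nlinarith)
    have key' : (m : ℝ) ≤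
        ((∑ i ∈ Finset.univ.filter (fun i => ∃ k, J ⊆ P.A k ∧ i ∈ P.A k),
          E.seats P.n i : ℕ) : ℝ) := by exact_mod_cast key
    rw [hnr]
    linarith
end

section
/- In the two-party setting with ζ[0] > 0, every execution of the Eneström–Phragmén procedure satisfies: (i) max(α[s]+ζ[s], β[s]+ζ[s]) > ρ for all s ≤ n−1; (ii) for all s ≤ n−1, if α[s] > β[s] the seat goes to A and α[s+1] = (1 − ρ/(α[s]+ζ[s]))·α[s], β[s+1] = β[s], ζ[s+1] = (1 − ρ/(α[s]+ζ[s]))·ζ[s], while if α[s] < β[s] the seat goes to B and the symmetric formulas hold (and if α[s] = β[s] either alternative may occur); (iii) α[s] + β[s] + ζ[s] = (n+1−s)·ρ for all s ≤ n; (iv) α[s] > 0, β[s] > 0 and ζ[s] > 0 for all s ≤ n. -/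
/-!
The Eneström–Phragmén procedure in the two-party setting: the candidates are two
parties `A` and `B` of unlimited capacity, and the vote types are `{A}`, `{B}` and
`{A,B}` with step-`s` weights (divided by the total vote `v`) denoted `α s`, `β s`
and `ζ s` respectively; `ρ n = q / v = 1 / (n + 1)` is the normalized Droop quota.
At step `s < n`, seat `s + 1` goes to `A` (recorded by `toA s = true`) or to `B`
(`toA s = false`); the winner must maximize the support (`α s + ζ s` for `A`,
`β s + ζ s` for `B`), and the votes approving the winner are reduced according
to the quota rule.
-/

namespace EP2

/-- The normalized Droop quota `ρ = q / v = 1 / (n + 1)`. -/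
noncomputable def ρ (n : ℕ) : ℝ := 1 / (n + 1)

/-- An execution of the Eneström–Phragmén procedure in the two-party setting, with
`n` seats and initial normalized weights `α0, β0, ζ0` of the vote types
`{A}`, `{B}`, `{A,B}`. -/
structure TPExec (n : ℕ) (α0 β0 ζ0 : ℝ) : Type where
  /-- normalized weight of the votes approving only `A` -/
  α : ℕ → ℝ
  /-- normalized weight of the votes approving only `B` -/
  β : ℕ → ℝ
  /-- normalized weight of the votes approving both `A` and `B` -/
  ζ : ℕ → ℝ
  /-- `toA s = true` iff seat `s + 1` is allocated to party `A` -/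
  toA : ℕ → Bool
  init_α : α 0 = α0
  init_β : β 0 = β0
  init_ζ : ζ 0 = ζ0
  /-- the winner maximizes the support: if `A` wins then `β s + ζ s ≤ α s + ζ s` -/
  choiceA : ∀ s < n, toA s = true → β s ≤ α s
  /-- the winner maximizes the support: if `B` wins then `α s + ζ s ≤ β s + ζ s` -/
  choiceB : ∀ s < n, toA s = false → α s ≤ β s
  stepA_ge : ∀ s < n, toA s = true → ρ n ≤ α s + ζ s →
    α (s + 1) = (1 - ρ n / (α s + ζ s)) * α s ∧
    ζ (s + 1) = (1 - ρ n / (α s + ζ s)) * ζ s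
  stepA_lt : ∀ s < n, toA s = true → α s + ζ s < ρ n →
    α (s + 1) = 0 ∧ ζ (s + 1) = 0
  stepA_β : ∀ s < n, toA s = true → β (s + 1) = β s
  stepB_ge : ∀ s < n, toA s = false → ρ n ≤ β s + ζ s →
    β (s + 1) = (1 - ρ n / (β s + ζ s)) * β s ∧
    ζ (s + 1) = (1 - ρ n / (β s + ζ s)) * ζ s
  stepB_lt : ∀ s < n, toA s = false → β s + ζ s < ρ n →
    β (s + 1) = 0 ∧ ζ (s + 1) = 0
  stepB_α : ∀ s < n, toA s = false → α (s + 1) = α s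

/-- Number of seats allocated to party `A` during steps `a, …, b - 1`. -/
def cntA {n : ℕ} {α0 β0 ζ0 : ℝ} (E : TPExec n α0 β0 ζ0) (a b : ℕ) : ℕ :=
  ((Finset.Ico a b).filter (fun s => E.toA s = true)).card

/-- Number of seats allocated to party `B` during steps `a, …, b - 1`. -/
def cntB {n : ℕ} {α0 β0 ζ0 : ℝ} (E : TPExec n α0 β0 ζ0) (a b : ℕ) : ℕ :=
  ((Finset.Ico a b).filter (fun s => E.toA s = false)).card

/-- Total number of seats allocated to party `A`. -/
def nA {n : ℕ} {α0 β0 ζ0 : ℝ} (E : TPExec n α0 β0 ζ0) : ℕ := cntA E 0 n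

end EP2

/-!
Every step removes exactly one quota `ρ` from the total weight, which therefore equals
`(n + 1 - s) ρ ≥ 2ρ` before each of the `n` steps. The winner, say `A` with `β ≤ α`,
has support `α + ζ ≥ (α + β + 2ζ) / 2 > (α + β + ζ) / 2 ≥ ρ` because `ζ > 0`, so the
proportional update applies, its factor `1 - ρ / (α + ζ)` lies in `(0, 1)`, and all
three weights stay positive. The case of `B` is reduced to that of `A` by swapping
the parties.
-/

namespace EP2

lemma ρ_pos (n : ℕ) : 0 < ρ n := by
  unfold ρ; positivity

namespace TPExec

variable {n : ℕ} {α0 β0 ζ0 : ℝ}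

def swap (E : TPExec n α0 β0 ζ0) : TPExec n β0 α0 ζ0 where
  α := E.β
  β := E.α
  ζ := E.ζ
  toA s := !E.toA s
  init_α := E.init_β
  init_β := E.init_α
  init_ζ := E.init_ζ
  choiceA s hs h := E.choiceB s hs (by simpa using h)
  choiceB s hs h := E.choiceA s hs (by simpa using h)
  stepA_ge s hs h := E.stepB_ge s hs (by simpa using h)
  stepA_lt s hs h := E.stepB_lt s hs (by simpa using h)
  stepA_β s hs h := E.stepB_α s hs (by simpa using h)
  stepB_ge s hs h := E.stepA_ge s hs (by simpa using h)
  stepB_lt s hs h := E.stepA_lt s hs (by simpa using h)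
  stepB_α s hs h := E.stepA_β s hs (by simpa using h)

variable (E : TPExec n α0 β0 ζ0)

def Invariant (s : ℕ) : Prop :=
  (0 < E.α s ∧ 0 < E.β s ∧ 0 < E.ζ s) ∧ E.α s + E.β s + E.ζ s = ((n : ℝ) + 1 - s) * ρ n

variable {E}

lemma invariant_swap {s : ℕ} : E.swap.Invariant s ↔ E.Invariant s := by
  simp only [Invariant, swap, add_comm (E.β s) (E.α s)]
  tauto

lemma toA_eq_true_of_lt {s : ℕ} (hs : s < n) (hlt : E.β s < E.α s) : E.toA s = true := by
  by_contra hB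
  exact (E.choiceB s hs (by simpa using hB)).not_gt hlt

lemma toA_eq_false_of_lt {s : ℕ} (hs : s < n) (hlt : E.α s < E.β s) : E.toA s = false := by
  simpa [swap] using E.swap.toA_eq_true_of_lt hs hlt

namespace Invariant

variable {s : ℕ}

lemma two_mul_ρ_le_total (h : E.Invariant s) (hs : s < n) :
    2 * ρ n ≤ E.α s + E.β s + E.ζ s := by
  have hcast : (s : ℝ) + 1 ≤ n := by exact_mod_cast hs
  rw [h.2]
  nlinarith [ρ_pos n]

lemma ρ_lt_of_toA (h : E.Invariant s) (hs : s < n) (hA : E.toA s = true) :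
    ρ n < E.α s + E.ζ s := by
  linarith [h.1.2.2, E.choiceA s hs hA, h.two_mul_ρ_le_total hs]

lemma step_of_toA (h : E.Invariant s) (hs : s < n) (hA : E.toA s = true) :
    E.α (s + 1) = (1 - ρ n / (E.α s + E.ζ s)) * E.α s ∧
      E.β (s + 1) = E.β s ∧
      E.ζ (s + 1) = (1 - ρ n / (E.α s + E.ζ s)) * E.ζ s :=
  have ⟨hα, hζ⟩ := E.stepA_ge s hs hA (h.ρ_lt_of_toA hs hA).le
  ⟨hα, E.stepA_β s hs hA, hζ⟩

lemma succ_of_toA (h : E.Invariant s) (hs : s < n) (hA : E.toA s = true) :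
    E.Invariant (s + 1) := by
  obtain ⟨hα, hβ, hζ⟩ := h.step_of_toA hs hA
  have hquota := h.ρ_lt_of_toA hs hA
  have hw : 0 < E.α s + E.ζ s := (ρ_pos n).trans hquota
  have hfactor : 0 < 1 - ρ n / (E.α s + E.ζ s) := sub_pos.2 ((div_lt_one hw).2 hquota)
  have htotal : E.α (s + 1) + E.β (s + 1) + E.ζ (s + 1) = E.α s + E.β s + E.ζ s - ρ n := by
    rw [hα, hβ, hζ]
    field_simp
    ring
  refine ⟨⟨?_, hβ ▸ h.1.2.1, ?_⟩, ?_⟩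
  · rw [hα]; exact mul_pos hfactor h.1.1
  · rw [hζ]; exact mul_pos hfactor h.1.2.2
  · rw [htotal, h.2]; push_cast; ring

lemma succ (h : E.Invariant s) (hs : s < n) : E.Invariant (s + 1) := by
  cases hA : E.toA s with
  | true => exact h.succ_of_toA hs hA
  | false => exact invariant_swap.1 ((invariant_swap.2 h).succ_of_toA hs (by simp [swap, hA]))

lemma ρ_lt_max (h : E.Invariant s) (hs : s < n) :
    ρ n < max (E.α s + E.ζ s) (E.β s + E.ζ s) := by
  cases hA : E.toA s with
  | true => exact lt_max_of_lt_left (h.ρ_lt_of_toA hs hA)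
  | false =>
    exact lt_max_of_lt_right ((invariant_swap.2 h).ρ_lt_of_toA hs (by simp [swap, hA]))

end Invariant

lemma invariant (hα0 : 0 < α0) (hβ0 : 0 < β0) (hζ0 : 0 < ζ0) (hsum : α0 + β0 + ζ0 = 1) :
    ∀ s ≤ n, E.Invariant s := by
  intro s hs
  induction s with
  | zero =>
    rw [Invariant, E.init_α, E.init_β, E.init_ζ]
    refine ⟨⟨hα0, hβ0, hζ0⟩, ?_⟩
    rw [hsum, ρ]
    field_simp
    simp
  | succ s ih => exact (ih (Nat.le_of_succ_le hs)).succ hs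

end TPExec

end EP2

open EP2 in
theorem enestrom_phragmen_two_party_lemma1_general
    (n : ℕ) (α0 β0 ζ0 : ℝ)
    (hα0 : 0 < α0) (hβ0 : 0 < β0) (hζ0 : 0 < ζ0) (hsum : α0 + β0 + ζ0 = 1)
    (E : TPExec n α0 β0 ζ0) :
    (∀ s < n, ρ n < max (E.α s + E.ζ s) (E.β s + E.ζ s)) ∧
    (∀ s < n,
      (E.β s < E.α s → E.toA s = true ∧
        E.α (s + 1) = (1 - ρ n / (E.α s + E.ζ s)) * E.α s ∧
        E.β (s + 1) = E.β s ∧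
        E.ζ (s + 1) = (1 - ρ n / (E.α s + E.ζ s)) * E.ζ s) ∧
      (E.α s < E.β s → E.toA s = false ∧
        E.β (s + 1) = (1 - ρ n / (E.β s + E.ζ s)) * E.β s ∧
        E.α (s + 1) = E.α s ∧
        E.ζ (s + 1) = (1 - ρ n / (E.β s + E.ζ s)) * E.ζ s)) ∧
    (∀ s ≤ n, E.α s + E.β s + E.ζ s = ((n : ℝ) + 1 - s) * ρ n) ∧
    (∀ s ≤ n, 0 < E.α s ∧ 0 < E.β s ∧ 0 < E.ζ s) := by
  have hinv := E.invariant hα0 hβ0 hζ0 hsum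
  refine ⟨fun s hs => (hinv s hs.le).ρ_lt_max hs, fun s hs => ⟨fun hlt => ?_, fun hlt => ?_⟩,
    fun s hs => (hinv s hs).2, fun s hs => (hinv s hs).1⟩
  · have hA := E.toA_eq_true_of_lt hs hlt
    exact ⟨hA, (hinv s hs.le).step_of_toA hs hA⟩
  · have hB := E.toA_eq_false_of_lt hs hlt
    exact ⟨hB, (TPExec.invariant_swap.2 (hinv s hs.le)).step_of_toA hs (by simp [TPExec.swap, hB])⟩

open EP2 in
/-- Lemma 1 of the paper: in the two-party setting with `ζ[0] > 0`,
every execution satisfies: (i) `max (α[s]+ζ[s], β[s]+ζ[s]) > ρ` for all `s ≤ n-1`;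
(ii) for `s ≤ n-1`, if `α[s] > β[s]` the seat goes to `A` and the update formulas of
equation (cases) hold, and symmetrically if `α[s] < β[s]`; (iii)
`α[s]+β[s]+ζ[s] = (n+1-s)·ρ` for all `s ≤ n`; (iv) `α[s], β[s], ζ[s] > 0` for all
`s ≤ n`. -/
theorem enestrom_phragmen_two_party_lemma1
    (n : ℕ) (hn : 1 ≤ n) (α0 β0 ζ0 : ℝ)
    (hα0 : 0 < α0) (hβ0 : 0 < β0) (hζ0 : 0 < ζ0) (hsum : α0 + β0 + ζ0 = 1)
    (E : TPExec n α0 β0 ζ0) :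
    (∀ s < n, ρ n < max (E.α s + E.ζ s) (E.β s + E.ζ s)) ∧
    (∀ s < n,
      (E.β s < E.α s → E.toA s = true ∧
        E.α (s + 1) = (1 - ρ n / (E.α s + E.ζ s)) * E.α s ∧
        E.β (s + 1) = E.β s ∧
        E.ζ (s + 1) = (1 - ρ n / (E.α s + E.ζ s)) * E.ζ s) ∧
      (E.α s < E.β s → E.toA s = false ∧
        E.β (s + 1) = (1 - ρ n / (E.β s + E.ζ s)) * E.β s ∧
        E.α (s + 1) = E.α s ∧
        E.ζ (s + 1) = (1 - ρ n / (E.β s + E.ζ s)) * E.ζ s)) ∧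
    (∀ s ≤ n, E.α s + E.β s + E.ζ s = ((n : ℝ) + 1 - s) * ρ n) ∧
    (∀ s ≤ n, 0 < E.α s ∧ 0 < E.β s ∧ 0 < E.ζ s) :=
  enestrom_phragmen_two_party_lemma1_general n α0 β0 ζ0 hα0 hβ0 hζ0 hsum E
end

section
/- In the two-party setting, write α = α[0], β = β[0], ζ = ζ[0] and suppose α ≥ β. Fix an execution of the Eneström–Phragmén procedure in which the first seat goes to A, and suppose there exists s ≤ n−1 with α[s] ≤ β[s]; let k be the least such s. Then the first k seats are all allocated to A, β[k] = β, α[k] = (1 − k·ρ/(α+ζ))·α, and k = ⌈(α−β)(α+ζ)/(α·ρ)⌉, where ⌈x⌉ denotes the least integer ≥ x. -/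
open EP2 in
/-- in the two-party setting with `α = α[0] ≥ β = β[0]`, fix an execution
whose first seat goes to `A`, and let `k` be the least `s ≤ n-1` with `α[s] ≤ β[s]`.
Then the first `k` seats all go to `A`, `β[k] = β`, `α[k] = (1 - kρ/(α+ζ))·α`, and
`k = ⌈(α-β)(α+ζ)/(αρ)⌉`. -/
theorem enestrom_phragmen_two_party_lead_length
    (n : ℕ) (hn : 1 ≤ n) (α0 β0 ζ0 : ℝ)
    (hα0 : 0 < α0) (hβ0 : 0 < β0) (hζ0 : 0 ≤ ζ0) (hsum : α0 + β0 + ζ0 = 1)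
    (hab : β0 ≤ α0)
    (E : TPExec n α0 β0 ζ0) (hfirst : E.toA 0 = true)
    (k : ℕ) (hkn : k < n) (hk : E.α k ≤ E.β k) (hkmin : ∀ s < k, E.β s < E.α s) :
    (∀ s < k, E.toA s = true) ∧
    E.β k = β0 ∧
    E.α k = (1 - (k : ℝ) * ρ n / (α0 + ζ0)) * α0 ∧
    (k : ℤ) = ⌈(α0 - β0) * (α0 + ζ0) / (α0 * ρ n)⌉ := by
  have hρ : 0 < ρ n := by
    have : (0:ℝ) < (n:ℝ) + 1 := by positivity
    simp only [ρ]; positivity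
  have hT : 0 < α0 + ζ0 := by linarith
  have hρval : ((n:ℝ) + 1) * ρ n = 1 := by
    simp only [ρ]; field_simp
  -- first k seats go to A
  have toAall : ∀ s < k, E.toA s = true := by
    intro s hs
    cases h : E.toA s with
    | true => rfl
    | false => exact absurd (E.choiceB s (hs.trans hkn) h) (not_le.mpr (hkmin s hs))
  -- main invariant
  have main : ∀ s, s ≤ k → E.β s = β0 ∧
      E.α s = (1 - (s : ℝ) * ρ n / (α0 + ζ0)) * α0 ∧
      E.ζ s = (1 - (s : ℝ) * ρ n / (α0 + ζ0)) * ζ0 := by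
    intro s
    induction s with
    | zero => intro _; simp [E.init_α, E.init_β, E.init_ζ]
    | succ s ih =>
      intro hs1
      have hsk : s < k := hs1
      obtain ⟨ihβ, ihα, ihζ⟩ := ih hsk.le
      have hsn : s < n := hsk.trans hkn
      have hA : E.toA s = true := toAall s hsk
      have hβα := hkmin s hsk
      rw [ihβ, ihα] at hβα
      have hcoef : 0 < 1 - (s : ℝ) * ρ n / (α0 + ζ0) := by
        by_contra h
        push_neg at h
        have : (1 - (s : ℝ) * ρ n / (α0 + ζ0)) * α0 ≤ 0 :=
          mul_nonpos_of_nonpos_of_nonneg h hα0.le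
        linarith
      have hsum' : E.α s + E.ζ s = (α0 + ζ0) - (s : ℝ) * ρ n := by
        rw [ihα, ihζ]
        field_simp
      have hquota : ρ n ≤ E.α s + E.ζ s := by
        by_cases hc : ρ n ≤ β0
        · have hζs : 0 ≤ E.ζ s := by rw [ihζ]; exact mul_nonneg hcoef.le hζ0
          have hαs : β0 < E.α s := by rw [ihα]; exact hβα
          linarith
        · push_neg at hc
          rw [hsum']
          have hs2 : (s : ℝ) + 2 ≤ (n : ℝ) := by
            have : s + 2 ≤ n := by omega
            exact_mod_cast this
          have hsρ : (s : ℝ) * ρ n ≤ ((n : ℝ) - 2) * ρ n :=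
            mul_le_mul_of_nonneg_right (by linarith) hρ.le
          have h1 : α0 + ζ0 = 1 - β0 := by linarith
          linarith
      obtain ⟨hα', hζ'⟩ := E.stepA_ge s hsn hA hquota
      have hne : α0 + ζ0 - (s : ℝ) * ρ n ≠ 0 := by
        rw [hsum'] at hquota; linarith
      refine ⟨by rw [E.stepA_β s hsn hA, ihβ], ?_, ?_⟩
      · rw [hα', hsum', ihα]
        push_cast
        rw [one_sub_div hne, one_sub_div hT.ne', one_sub_div hT.ne']
        field_simp
        ring
      · rw [hζ', hsum', ihζ]
        push_cast
        rw [one_sub_div hne, one_sub_div hT.ne', one_sub_div hT.ne']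
        field_simp
        ring
  obtain ⟨hβk, hαk, -⟩ := main k le_rfl
  refine ⟨toAall, hβk, hαk, ?_⟩
  have hαρ : 0 < α0 * ρ n := by positivity
  symm
  rw [Int.ceil_eq_iff]
  push_cast
  constructor
  · rcases Nat.eq_zero_or_pos k with hk0 | hk1
    · subst hk0
      have h0 : α0 ≤ β0 := by
        have := hk; rwa [E.init_α, E.init_β] at this
      have : α0 = β0 := le_antisymm h0 hab
      rw [this]
      simp
    · obtain ⟨j, rfl⟩ : ∃ j, k = j + 1 := ⟨k - 1, by omega⟩
      obtain ⟨hβj, hαj, -⟩ := main j (by omega)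
      have h := hkmin j (by omega)
      rw [hβj, hαj] at h
      have h' : β0 * (α0 + ζ0) < (α0 + ζ0 - (j : ℝ) * ρ n) * α0 := by
        have e : (1 - (j : ℝ) * ρ n / (α0 + ζ0)) * α0
            = (α0 + ζ0 - (j : ℝ) * ρ n) * α0 / (α0 + ζ0) := by
          field_simp
        rw [e, lt_div_iff₀ hT] at h
        linarith
      push_cast
      rw [show ((j:ℝ) + 1) - 1 = (j:ℝ) by ring, lt_div_iff₀ hαρ]
      nlinarith [h']
  · have h := hk
    rw [hαk, hβk] at h
    have h' : (α0 + ζ0 - (k : ℝ) * ρ n) * α0 ≤ β0 * (α0 + ζ0) := by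
      have e : (1 - (k : ℝ) * ρ n / (α0 + ζ0)) * α0
          = (α0 + ζ0 - (k : ℝ) * ρ n) * α0 / (α0 + ζ0) := by
        field_simp
      rw [e, div_le_iff₀ hT] at h
      linarith
    rw [div_le_iff₀ hαρ]
    nlinarith [h']
end
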